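/- arXiv:2001.11541 — 8 statements merged into one kernel-verified Lean document; each statement's English description precedes it below -/
import Mathlib

section
/- Let m, d ≥ 1, let L_i(x) = c_i + ⟨ℓ_i, x⟩ (i = 1,…,d) be affine linear functions on ℝ^m, and let Δ = {x ∈ ℝ^m : L_i(x) ≥ 0 for all i}. Let f(x) = a₀ + ⟨a,x⟩ with a₀ > 0 be strictly positive on Δ, and define the f-twist transforms L̃_i(y) = c_i/a₀ + ⟨ℓ_i − (c_i/a₀)·a, y⟩ and f̃(y) = (1/a₀)(1 − ⟨a,y⟩). Then the image of Δ under the f-twist map T(x) = x/f(x) equals {y ∈ ℝ^m : f̃(y) > 0 and L̃_i(y) ≥ 0 for all i = 1,…,d}. -/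
/-!
The identity `L̃ (x / f x) = L x / f x` for every affine `L`, with `f̃` the twist of the constant
function `1`, gives one inclusion. The twist is an involution: twisting by `f̃` recovers `f` and
every `L`, and the `f̃`-twist map inverts the `f`-twist map, so the same identity applied to `f̃`
gives the other.
-/

namespace AffineMap

variable {E : Type*} [AddCommGroup E] [Module ℝ E]

noncomputable def twistMap (f : E →ᵃ[ℝ] ℝ) (x : E) : E := (f x)⁻¹ • x

/-- The paper's `L̃`; its `f̃` is `f.twist (const ℝ E 1)`. -/
noncomputable def twist (f L : E →ᵃ[ℝ] ℝ) : E →ᵃ[ℝ] ℝ :=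
  (L.linear - (L 0 / f 0) • f.linear).toAffineMap + const ℝ E (L 0 / f 0)

theorem twist_apply (f L : E →ᵃ[ℝ] ℝ) (y : E) :
    f.twist L y = L.linear y - L 0 / f 0 * f.linear y + L 0 / f 0 := rfl

theorem twist_linear (f L : E →ᵃ[ℝ] ℝ) :
    (f.twist L).linear = L.linear - (L 0 / f 0) • f.linear := by
  simp [twist]

theorem twist_apply_zero (f L : E →ᵃ[ℝ] ℝ) : f.twist L 0 = L 0 / f 0 := by
  simp [twist_apply]

theorem twist_apply_twistMap {f : E →ᵃ[ℝ] ℝ} (hf₀ : f 0 ≠ 0) (L : E →ᵃ[ℝ] ℝ) {x : E}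
    (hx : f x ≠ 0) : f.twist L (f.twistMap x) = L x / f x := by
  have hLx : L x = L.linear x + L 0 := congrFun L.decomp x
  have hfx : f x = f.linear x + f 0 := congrFun f.decomp x
  rw [twist_apply, twistMap, map_smul, map_smul, smul_eq_mul, smul_eq_mul, hLx]
  rw [hfx] at hx ⊢
  field_simp
  ring

theorem twist_self {f : E →ᵃ[ℝ] ℝ} (hf₀ : f 0 ≠ 0) : f.twist f = const ℝ E 1 := by
  ext y
  simp [twist_apply, hf₀]

theorem twist_twist {f : E →ᵃ[ℝ] ℝ} (hf₀ : f 0 ≠ 0) (L : E →ᵃ[ℝ] ℝ) :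
    (f.twist (const ℝ E 1)).twist (f.twist L) = L := by
  refine ext_linear ?_ (p := 0) ?_
  · simp only [twist_linear, twist_apply_zero, const_linear, const_apply]
    field_simp
    module
  · simp only [twist_apply_zero, const_apply]
    field_simp

theorem twistMap_twistMap {f : E →ᵃ[ℝ] ℝ} (hf₀ : f 0 ≠ 0) {x : E} (hx : f x ≠ 0) :
    (f.twist (const ℝ E 1)).twistMap (f.twistMap x) = x := by
  rw [twistMap, twist_apply_twistMap hf₀ _ hx, twistMap, const_apply, inv_div, div_one, smul_smul,
    mul_inv_cancel₀ hx, one_smul]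

theorem image_twistMap {ι : Type*} {f : E →ᵃ[ℝ] ℝ} (hf₀ : f 0 ≠ 0) (L : ι → E →ᵃ[ℝ] ℝ)
    (hf : ∀ x, (∀ i, 0 ≤ L i x) → 0 < f x) :
    f.twistMap '' {x | ∀ i, 0 ≤ L i x} =
      {y | 0 < f.twist (const ℝ E 1) y ∧ ∀ i, 0 ≤ f.twist (L i) y} := by
  ext y
  constructor
  · rintro ⟨x, hx, rfl⟩
    have hfx := hf x hx
    simp only [Set.mem_ofPred_eq, twist_apply_twistMap hf₀ _ hfx.ne', const_apply]
    exact ⟨by positivity, fun i => div_nonneg (hx i) hfx.le⟩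
  · rintro ⟨hy, hLy⟩
    set g := f.twist (const ℝ E 1)
    have hg₀ : g 0 ≠ 0 := by simp [g, twist_apply_zero, hf₀]
    have hgf : g.twist (const ℝ E 1) = f := by rw [← twist_self hf₀, twist_twist hf₀]
    refine ⟨g.twistMap y, fun i => ?_, ?_⟩
    · rw [← twist_twist hf₀ (L i), twist_apply_twistMap hg₀ _ hy.ne']
      exact div_nonneg (hLy i) hy.le
    · simpa only [hgf] using twistMap_twistMap hg₀ hy.ne'

noncomputable def dotProductAddConst {ι : Type*} [Fintype ι] (v : ι → ℝ) (c : ℝ) :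
    (ι → ℝ) →ᵃ[ℝ] ℝ :=
  (dotProductBilin ℝ ℝ v).toAffineMap + const ℝ _ c

@[simp]
theorem dotProductAddConst_apply {ι : Type*} [Fintype ι] (v : ι → ℝ) (c : ℝ) (x : ι → ℝ) :
    dotProductAddConst v c x = v ⬝ᵥ x + c := rfl

@[simp]
theorem dotProductAddConst_linear {ι : Type*} [Fintype ι] (v : ι → ℝ) (c : ℝ) :
    (dotProductAddConst v c).linear = dotProductBilin ℝ ℝ v := by
  simp [dotProductAddConst]

theorem twist_dotProductAddConst {ι : Type*} [Fintype ι] (a ℓ : ι → ℝ) (a₀ c : ℝ) :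
    (dotProductAddConst a a₀).twist (dotProductAddConst ℓ c) =
      dotProductAddConst (ℓ - (c / a₀) • a) (c / a₀) := by
  ext y
  simp [twist_apply, sub_dotProduct]

end AffineMap

open AffineMap in
theorem stmt1_general (m d : ℕ)
    (c : Fin d → ℝ) (ℓ : Fin d → Fin m → ℝ)
    (L : Fin d → (Fin m → ℝ) → ℝ)
    (hL : ∀ i x, L i x = c i + ∑ j, ℓ i j * x j)
    (Δ : Set (Fin m → ℝ)) (hΔ : Δ = {x | ∀ i, 0 ≤ L i x})
    (a₀ : ℝ) (ha₀ : 0 < a₀) (a : Fin m → ℝ)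
    (f : (Fin m → ℝ) → ℝ) (hf : ∀ x, f x = a₀ + ∑ j, a j * x j)
    (hfΔ : ∀ x ∈ Δ, 0 < f x)
    (T : (Fin m → ℝ) → (Fin m → ℝ)) (hT : ∀ x, T x = (f x)⁻¹ • x)
    (Ltil : Fin d → (Fin m → ℝ) → ℝ)
    (hLtil : ∀ i y, Ltil i y = c i / a₀ + ∑ j, (ℓ i j - (c i / a₀) * a j) * y j)
    (ftil : (Fin m → ℝ) → ℝ)
    (hftil : ∀ y, ftil y = (1 / a₀) * (1 - ∑ j, a j * y j)) :
    T '' Δ = {y | 0 < ftil y ∧ ∀ i, 0 ≤ Ltil i y} := by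
  set F := dotProductAddConst a a₀
  have hfF : f = F := funext fun x => by simp [F, hf, dotProduct, add_comm]
  have hLF : L = fun i => ⇑(dotProductAddConst (ℓ i) (c i)) :=
    funext₂ fun i x => by simp [hL, dotProduct, add_comm]
  have hTF : T = F.twistMap := funext fun x => by rw [hT, hfF]; rfl
  have hLtilF : Ltil = fun i => ⇑(F.twist (dotProductAddConst (ℓ i) (c i))) := by
    ext i y
    rw [hLtil, twist_dotProductAddConst]
    simp [dotProduct, add_comm]
  have hftilF : ftil = F.twist (const ℝ _ 1) := by
    ext y
    simp [hftil, twist_apply, F, dotProduct, mul_sub, neg_add_eq_sub]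
  subst hfF hLF hTF hLtilF hftilF hΔ
  exact image_twistMap (by simpa [F] using ha₀.ne') _ hfΔ

/-- The image under the f-twist map T(x) = x/f(x) of the polytope
Δ = {x : Lᵢ(x) ≥ 0 ∀i} (on which f > 0) is the set {y : f̃(y) > 0 and L̃ᵢ(y) ≥ 0 ∀i},
where L̃ᵢ and f̃ are the f-twist transforms of the labels Lᵢ and of f. -/
theorem stmt1 (m d : ℕ) (hm : 1 ≤ m) (hd : 1 ≤ d)
    (c : Fin d → ℝ) (ℓ : Fin d → Fin m → ℝ)
    (L : Fin d → (Fin m → ℝ) → ℝ)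
    (hL : ∀ i x, L i x = c i + ∑ j, ℓ i j * x j)
    (Δ : Set (Fin m → ℝ)) (hΔ : Δ = {x | ∀ i, 0 ≤ L i x})
    (a₀ : ℝ) (ha₀ : 0 < a₀) (a : Fin m → ℝ)
    (f : (Fin m → ℝ) → ℝ) (hf : ∀ x, f x = a₀ + ∑ j, a j * x j)
    (hfΔ : ∀ x ∈ Δ, 0 < f x)
    (T : (Fin m → ℝ) → (Fin m → ℝ)) (hT : ∀ x, T x = (f x)⁻¹ • x)
    (Ltil : Fin d → (Fin m → ℝ) → ℝ)
    (hLtil : ∀ i y, Ltil i y = c i / a₀ + ∑ j, (ℓ i j - (c i / a₀) * a j) * y j)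
    (ftil : (Fin m → ℝ) → ℝ)
    (hftil : ∀ y, ftil y = (1 / a₀) * (1 - ∑ j, a j * y j)) :
    T '' Δ = {y | 0 < ftil y ∧ ∀ i, 0 ≤ Ltil i y} :=
  stmt1_general m d c ℓ L hL Δ hΔ a₀ ha₀ a f hf hfΔ T hT Ltil hLtil ftil hftil
end

section
/- Let m ≥ 1, a₀ ∈ ℝ, a ∈ ℝ^m, f(x) = a₀ + ⟨a,x⟩, and T(x) = x/f(x). Then for every x with f(x) ≠ 0, the determinant of the Fréchet derivative of T at x equals a₀/f(x)^{m+1}. -/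
/-!
By the product rule, `DT(x) = f(x)⁻¹ • id + v ↦ -(f(x)⁻² ⟨a, v⟩) • x`, a scalar plus a rank-one
map. The matrix determinant lemma `det (c • 1 + u vᵀ) = cᵐ (1 + c⁻¹ ⟨v, u⟩)` then gives
`f(x)⁻ᵐ (1 - ⟨a, x⟩ / f(x)) = a₀ / f(x)^(m+1)`.
-/

open Module

theorem LinearMap.det_id_add_smulRight {R M : Type*} [CommRing R] [AddCommGroup M] [Module R M]
    [Free R M] [Module.Finite R M] (φ : M →ₗ[R] R) (v : M) :
    LinearMap.det (LinearMap.id + φ.smulRight v) = 1 + φ v := by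
  let b := Free.chooseBasis R M
  rw [← det_toMatrix b, map_add, toMatrix_id, toMatrix_smulRight, Matrix.vecMulVec_eq Unit,
    Matrix.det_one_add_replicateCol_mul_replicateRow]
  conv_rhs => rw [← b.sum_repr v, map_sum]
  simp [dotProduct, mul_comm]

theorem LinearMap.det_smul_id_add_smulRight {K M : Type*} [Field K] [AddCommGroup M] [Module K M]
    [FiniteDimensional K M] {c : K} (hc : c ≠ 0) (φ : M →ₗ[K] K) (v : M) :
    LinearMap.det (c • LinearMap.id + φ.smulRight v) = c ^ finrank K M * (1 + c⁻¹ * φ v) := by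
  have : c • LinearMap.id + φ.smulRight v = c • (LinearMap.id + (c⁻¹ • φ).smulRight v) := by
    ext w; simp [smul_smul, hc]
  rw [this, det_smul, det_id_add_smulRight, LinearMap.smul_apply, smul_eq_mul]

theorem ContinuousLinearMap.toLinearMap_smulRight {R M M₂ : Type*} [CommSemiring R]
    [TopologicalSpace R] [AddCommMonoid M] [Module R M] [TopologicalSpace M]
    [AddCommMonoid M₂] [Module R M₂] [TopologicalSpace M₂] [ContinuousSMul R M₂]
    (φ : M →L[R] R) (v : M₂) :
    (φ.smulRight v : M →ₗ[R] M₂) = (φ : M →ₗ[R] R).smulRight v :=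
  rfl

theorem HasFDerivAt.inv_smul_self {𝕜 E : Type*} [NontriviallyNormedField 𝕜] [NormedAddCommGroup E]
    [NormedSpace 𝕜 E] {g : E → 𝕜} {g' : E →L[𝕜] 𝕜} {x : E} (hg : HasFDerivAt g g' x)
    (hx : g x ≠ 0) :
    HasFDerivAt (fun y => (g y)⁻¹ • y)
      ((g x)⁻¹ • ContinuousLinearMap.id 𝕜 E + (-(g x ^ 2)⁻¹ • g').smulRight x) x :=
  ((hasDerivAt_inv hx).comp_hasFDerivAt x hg).smul (hasFDerivAt_id x)

theorem hasFDerivAt_const_add_sum_mul {m : ℕ} (a₀ : ℝ) (a x : Fin m → ℝ) :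
    HasFDerivAt (fun y : Fin m → ℝ => a₀ + ∑ i, a i * y i)
      (∑ i, a i • ContinuousLinearMap.proj (R := ℝ) (φ := fun _ : Fin m => ℝ) i) x :=
  (HasFDerivAt.fun_sum fun i _ => (hasFDerivAt_apply i x).const_mul (a i)).const_add a₀

theorem stmt4_general (m : ℕ) (a₀ : ℝ) (a : Fin m → ℝ)
    (f : (Fin m → ℝ) → ℝ) (hf : ∀ x, f x = a₀ + ∑ i, a i * x i)
    (T : (Fin m → ℝ) → (Fin m → ℝ)) (hT : ∀ x, T x = (f x)⁻¹ • x) :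
    ∀ x : Fin m → ℝ, f x ≠ 0 →
      LinearMap.det ((fderiv ℝ T x : (Fin m → ℝ) →L[ℝ] (Fin m → ℝ)) :
          (Fin m → ℝ) →ₗ[ℝ] (Fin m → ℝ)) = a₀ / (f x) ^ (m + 1) := by
  intro x hx
  set ℓ := ∑ i, a i • ContinuousLinearMap.proj (R := ℝ) (φ := fun _ : Fin m => ℝ) i
  have hℓ : ℓ x = f x - a₀ := by simp [ℓ, hf]
  have hf' : HasFDerivAt f ℓ x := funext hf ▸ hasFDerivAt_const_add_sum_mul a₀ a x
  rw [funext hT, (hf'.inv_smul_self hx).fderiv, ContinuousLinearMap.toLinearMap_add,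
    ContinuousLinearMap.toLinearMap_smul, ContinuousLinearMap.coe_id, ContinuousLinearMap.toLinearMap_smulRight,
    LinearMap.det_smul_id_add_smulRight (inv_ne_zero hx), Module.finrank_fin_fun, inv_inv,
    ContinuousLinearMap.coe_coe, smul_apply, hℓ, smul_eq_mul, inv_pow]
  field_simp
  ring

/-- The Jacobian determinant of the f-twist map T(x) = x/f(x),
f(x) = a₀ + ⟨a,x⟩, at any point x with f(x) ≠ 0, equals a₀/f(x)^{m+1}. -/
theorem stmt4 (m : ℕ) (hm : 1 ≤ m) (a₀ : ℝ) (a : Fin m → ℝ)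
    (f : (Fin m → ℝ) → ℝ) (hf : ∀ x, f x = a₀ + ∑ i, a i * x i)
    (T : (Fin m → ℝ) → (Fin m → ℝ)) (hT : ∀ x, T x = (f x)⁻¹ • x) :
    ∀ x : Fin m → ℝ, f x ≠ 0 →
      LinearMap.det ((fderiv ℝ T x : (Fin m → ℝ) →L[ℝ] (Fin m → ℝ)) :
          (Fin m → ℝ) →ₗ[ℝ] (Fin m → ℝ)) = a₀ / (f x) ^ (m + 1) :=
  stmt4_general m a₀ a f hf T hT
end

section
/- Let a₀, a₁, a₂ ∈ ℝ with a₀ ≠ 0, let f(x₁,x₂) = a₀ + a₁x₁ + a₂x₂, let U ⊆ ℝ² be open with f > 0 on U, and let u : ℝ² → ℝ be twice continuously differentiable on U. Define f̃(y₁,y₂) = (1/a₀)(1 − a₁y₁ − a₂y₂), the inverse twist S(y) = y/f̃(y), and ũ(y) = u(S(y))·f̃(y) on T(U), where T(x) = x/f(x) (so that ũ(T(x)) = u(x)/f(x)). Then for every x ∈ U, the determinant of the 2×2 Hessian matrix of ũ at T(x) equals (f(x)⁴/a₀²) times the determinant of the 2×2 Hessian matrix of u at x. -/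
/-!
Write `g` for `f̃`, `b` for its (constant) derivative and `x = S y`. Differentiating
`ũ = (u ∘ S) · g` gives `Dũ(y) = Du(x) + (u(x) - Du(x) x) • b`, a function of `x` alone, and
differentiating once more gives `D²ũ(y)(v, w) = g(y)⁻¹ D²u(x)(P v, P w)` with `P v = v - b(v) x`.
By the matrix determinant lemma `det P = 1 - b(x)`, so in the plane
`det D²ũ(y) = ((1 - b(x)) / g(y))² det D²u(x)`; at `y = T x` we have `g(y) = 1 / f(x)` and
`1 - b(x) = f(x) / a₀`.
-/

/-- The `i`-th partial derivative of a function on ℝ². -/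
noncomputable def pderiv2 (i : Fin 2) (v : (Fin 2 → ℝ) → ℝ) : (Fin 2 → ℝ) → ℝ :=
  fun x => fderiv ℝ v x (Pi.single i 1)

/-- The determinant of the 2×2 Hessian matrix of a function on ℝ². -/
noncomputable def hessDet2 (v : (Fin 2 → ℝ) → ℝ) (x : Fin 2 → ℝ) : ℝ :=
  pderiv2 0 (pderiv2 0 v) x * pderiv2 1 (pderiv2 1 v) x -
    pderiv2 0 (pderiv2 1 v) x * pderiv2 1 (pderiv2 0 v) x

open Filter Topology

section Twist

variable {E : Type*} [NormedAddCommGroup E] [NormedSpace ℝ E]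

noncomputable def twist (g u : E → ℝ) (y : E) : ℝ := u ((g y)⁻¹ • y) * g y

variable {g u : E → ℝ} {b : E →L[ℝ] ℝ} {x y : E}

theorem hasFDerivAt_inv_smul_self (hg : HasFDerivAt g b y) (hy : g y ≠ 0) :
    HasFDerivAt (fun z => (g z)⁻¹ • z)
      ((g y)⁻¹ • (ContinuousLinearMap.id ℝ E - b.smulRight ((g y)⁻¹ • y))) y := by
  refine (((hasDerivAt_inv hy).comp_hasFDerivAt y hg).smul (hasFDerivAt_id y)).congr_fderiv ?_
  ext v
  simp only [Function.comp_apply, neg_smul, id_eq, add_apply, smul_apply,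
    ContinuousLinearMap.id_apply, ContinuousLinearMap.smulRight_apply, neg_apply, smul_eq_mul,
    sub_apply]
  module

theorem hasFDerivAt_twist {u' : E →L[ℝ] ℝ} (hg : HasFDerivAt g b y) (hy : g y ≠ 0)
    (hx : (g y)⁻¹ • y = x) (hu : HasFDerivAt u u' x) :
    HasFDerivAt (twist g u) (u' + (u x - u' x) • b) y := by
  subst hx
  refine ((hu.comp y (f := fun z => (g z)⁻¹ • z) (hasFDerivAt_inv_smul_self hg hy)).mul
    hg).congr_fderiv ?_
  ext v
  simp only [Function.comp_apply, ContinuousLinearMap.comp_smulₛₗ, map_inv₀, Real.ringHom_apply,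
    ContinuousLinearMap.comp_sub, ContinuousLinearMap.comp_id, add_apply, smul_apply, smul_eq_mul,
    sub_apply, ContinuousLinearMap.comp_apply, ContinuousLinearMap.smulRight_apply, map_smul]
  field_simp
  ring

noncomputable def twistGradient (u : E → ℝ) (b : E →L[ℝ] ℝ) (z : E) : E →L[ℝ] ℝ :=
  fderiv ℝ u z + (u z - fderiv ℝ u z z) • b

theorem hasFDerivAt_twistGradient {u'' : E →L[ℝ] E →L[ℝ] ℝ} (hu : DifferentiableAt ℝ u x)
    (hu'' : HasFDerivAt (fderiv ℝ u) u'' x) (b : E →L[ℝ] ℝ) :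
    HasFDerivAt (twistGradient u b) (u'' - (u''.flip x).smulRight b) x := by
  refine (hu''.add ((hu.hasFDerivAt.sub (hu''.clm_apply (hasFDerivAt_id x))).smul_const
    b)).congr_fderiv ?_
  ext v w
  simp [sub_eq_add_neg]

theorem hasFDerivAt_fderiv_twist {u'' : E →L[ℝ] E →L[ℝ] ℝ} (hg : ∀ z, HasFDerivAt g b z)
    (hy : g y ≠ 0) (hx : (g y)⁻¹ • y = x) (hu : ∀ᶠ z in 𝓝 x, DifferentiableAt ℝ u z)
    (hu'' : HasFDerivAt (fderiv ℝ u) u'' x) :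
    HasFDerivAt (fderiv ℝ (twist g u))
      ((g y)⁻¹ • u''.bilinearComp (ContinuousLinearMap.id ℝ E - b.smulRight x)
        (ContinuousLinearMap.id ℝ E - b.smulRight x)) y := by
  subst hx
  have hS := hasFDerivAt_inv_smul_self (hg y) hy
  have hfderiv :
      fderiv ℝ (twist g u) =ᶠ[𝓝 y] twistGradient u b ∘ fun z => (g z)⁻¹ • z := by
    filter_upwards [(hg y).continuousAt.eventually_ne hy, hS.continuousAt.eventually hu]
      with z hz hdiff
    exact (hasFDerivAt_twist (hg z) hz rfl hdiff.hasFDerivAt).fderiv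
  have hcomp := (hasFDerivAt_twistGradient hu.self_of_nhds hu'' b).comp y
    (f := fun z => (g z)⁻¹ • z) hS
  refine (hcomp.congr_of_eventuallyEq hfderiv).congr_fderiv ?_
  ext v w
  simp only [ContinuousLinearMap.comp_apply, ContinuousLinearMap.bilinearComp_apply,
    ContinuousLinearMap.smulRight_apply, ContinuousLinearMap.flip_apply,
    ContinuousLinearMap.id_apply, smul_apply, sub_apply, map_sub, map_smul, smul_eq_mul]
  ring

end Twist

section GramMatrix

open Matrix

variable {ι : Type*} [Fintype ι] [DecidableEq ι]

theorem toMatrix₂'_bilinearComp (B : (ι → ℝ) →L[ℝ] (ι → ℝ) →L[ℝ] ℝ) (P : (ι → ℝ) →L[ℝ] ι → ℝ) :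
    LinearMap.toMatrix₂' ℝ (B.bilinearComp P P).toLinearMap₁₂ =
      (LinearMap.toMatrix' (P : (ι → ℝ) →ₗ[ℝ] ι → ℝ))ᵀ * LinearMap.toMatrix₂' ℝ B.toLinearMap₁₂ *
        LinearMap.toMatrix' (P : (ι → ℝ) →ₗ[ℝ] ι → ℝ) := by
  rw [← LinearMap.toMatrix₂'_compl₁₂]
  rfl

theorem det_toMatrix'_id_sub_smulRight (b : (ι → ℝ) →L[ℝ] ℝ) (x : ι → ℝ) :
    (LinearMap.toMatrix' ((ContinuousLinearMap.id ℝ (ι → ℝ) - b.smulRight x :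
      (ι → ℝ) →L[ℝ] ι → ℝ) : (ι → ℝ) →ₗ[ℝ] ι → ℝ)).det = 1 - b x := by
  have hmat : LinearMap.toMatrix' ((ContinuousLinearMap.id ℝ (ι → ℝ) - b.smulRight x :
      (ι → ℝ) →L[ℝ] ι → ℝ) : (ι → ℝ) →ₗ[ℝ] ι → ℝ) =
      1 + replicateCol Unit (-x) * replicateRow Unit (fun j => b (Pi.single j 1)) := by
    ext i j
    simp [LinearMap.toMatrix'_apply, one_apply, mul_apply, Pi.single_apply, sub_eq_add_neg,
      mul_comm]
  rw [hmat, det_one_add_replicateCol_mul_replicateRow]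
  conv_rhs => rw [pi_eq_sum_univ' x]
  simp [dotProduct, sub_eq_add_neg, mul_comm]

theorem det_toMatrix₂'_bilinearComp_id_sub_smulRight (B : (ι → ℝ) →L[ℝ] (ι → ℝ) →L[ℝ] ℝ)
    (b : (ι → ℝ) →L[ℝ] ℝ) (x : ι → ℝ) :
    (LinearMap.toMatrix₂' ℝ (B.bilinearComp (ContinuousLinearMap.id ℝ (ι → ℝ) - b.smulRight x)
      (ContinuousLinearMap.id ℝ (ι → ℝ) - b.smulRight x)).toLinearMap₁₂).det =
      (1 - b x) ^ 2 * (LinearMap.toMatrix₂' ℝ B.toLinearMap₁₂).det := by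
  rw [toMatrix₂'_bilinearComp, det_mul, det_mul, det_transpose, det_toMatrix'_id_sub_smulRight]
  ring

end GramMatrix

theorem pderiv2_pderiv2_eq {v : (Fin 2 → ℝ) → ℝ} {x : Fin 2 → ℝ}
    {B : (Fin 2 → ℝ) →L[ℝ] (Fin 2 → ℝ) →L[ℝ] ℝ} (hB : HasFDerivAt (fderiv ℝ v) B x) (i j : Fin 2) :
    pderiv2 i (pderiv2 j v) x = B (Pi.single i 1) (Pi.single j 1) := by
  have h := (ContinuousLinearMap.apply ℝ ℝ (Pi.single j (1 : ℝ) : Fin 2 → ℝ)).hasFDerivAt.comp x hB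
  exact congrArg (· (Pi.single i 1)) h.fderiv

theorem hessDet2_eq_det_toMatrix₂' {v : (Fin 2 → ℝ) → ℝ} {x : Fin 2 → ℝ}
    {B : (Fin 2 → ℝ) →L[ℝ] (Fin 2 → ℝ) →L[ℝ] ℝ} (hB : HasFDerivAt (fderiv ℝ v) B x) :
    hessDet2 v x = (LinearMap.toMatrix₂' ℝ B.toLinearMap₁₂).det := by
  simp [hessDet2, Matrix.det_fin_two, LinearMap.toMatrix₂'_apply, pderiv2_pderiv2_eq hB]

theorem hessDet2_twist {g u : (Fin 2 → ℝ) → ℝ} {b : (Fin 2 → ℝ) →L[ℝ] ℝ} {x y : Fin 2 → ℝ}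
    (hg : ∀ z, HasFDerivAt g b z) (hy : g y ≠ 0) (hx : (g y)⁻¹ • y = x)
    (hu : ContDiffAt ℝ 2 u x) :
    hessDet2 (twist g u) y = ((1 - b x) / g y) ^ 2 * hessDet2 u x := by
  have hu₁ : ∀ᶠ z in 𝓝 x, DifferentiableAt ℝ u z :=
    (hu.eventually (by simp)).mono fun z hz => hz.differentiableAt (by norm_num)
  have hu₂ : HasFDerivAt (fderiv ℝ u) (fderiv ℝ (fderiv ℝ u) x) x :=
    ((hu.fderiv_right (m := 1) (by norm_num)).differentiableAt (by norm_num)).hasFDerivAt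
  rw [hessDet2_eq_det_toMatrix₂' (hasFDerivAt_fderiv_twist hg hy hx hu₁ hu₂),
    hessDet2_eq_det_toMatrix₂' hu₂, map_smul, map_smul, Matrix.det_smul,
    det_toMatrix₂'_bilinearComp_id_sub_smulRight, Fintype.card_fin]
  ring

/-- For a C² function u on an open set U ⊆ ℝ² where
f(x) = a₀ + a₁x₁ + a₂x₂ > 0 (a₀ ≠ 0), the f-twist transform ũ(ỹ) = u(S(y))·f̃(y)
(so that ũ(T(x)) = u(x)/f(x)) satisfies
det Hess ũ (T x) = (f(x)⁴/a₀²)·det Hess u (x) for all x ∈ U. -/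
theorem stmt6 (a₀ a₁ a₂ : ℝ) (ha₀ : a₀ ≠ 0)
    (f : (Fin 2 → ℝ) → ℝ) (hf : ∀ x, f x = a₀ + a₁ * x 0 + a₂ * x 1)
    (U : Set (Fin 2 → ℝ)) (hU : IsOpen U) (hfU : ∀ x ∈ U, 0 < f x)
    (u : (Fin 2 → ℝ) → ℝ) (hu : ContDiffOn ℝ 2 u U)
    (ftil : (Fin 2 → ℝ) → ℝ)
    (hftil : ∀ y, ftil y = (1 / a₀) * (1 - a₁ * y 0 - a₂ * y 1))
    (T S : (Fin 2 → ℝ) → (Fin 2 → ℝ))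
    (hT : ∀ x, T x = (f x)⁻¹ • x)
    (hS : ∀ y, S y = (ftil y)⁻¹ • y)
    (util : (Fin 2 → ℝ) → ℝ)
    (hutil : ∀ y, util y = u (S y) * ftil y) :
    ∀ x ∈ U, hessDet2 util (T x) = (f x) ^ 4 / a₀ ^ 2 * hessDet2 u x := by
  intro x hx
  have hfx : f x ≠ 0 := (hfU x hx).ne'
  set b : (Fin 2 → ℝ) →L[ℝ] ℝ :=
    -(a₁ / a₀) • ContinuousLinearMap.proj 0 - (a₂ / a₀) • ContinuousLinearMap.proj 1
  have hb : ∀ z, HasFDerivAt ftil b z := by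
    have hftil_affine : ftil = fun z => 1 / a₀ + b z := funext fun z => by
      rw [hftil]
      simp only [b, sub_apply, smul_apply, ContinuousLinearMap.proj_apply, smul_eq_mul]
      field_simp
      ring
    exact fun z => hftil_affine ▸ b.hasFDerivAt.const_add _
  have hbx : 1 - b x = f x / a₀ := by
    simp only [b, hf, sub_apply, smul_apply, ContinuousLinearMap.proj_apply, smul_eq_mul]
    field_simp
    ring
  have hgT : ftil (T x) = (f x)⁻¹ := by
    rw [hftil, hT]
    simp only [Pi.smul_apply, smul_eq_mul]
    field_simp
    linear_combination hf x
  have hST : (ftil (T x))⁻¹ • T x = x := by rw [hgT, inv_inv, hT, smul_inv_smul₀ hfx]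
  have hutil_eq : util = twist ftil u := funext fun y => by rw [hutil, hS, twist]
  rw [hutil_eq, hessDet2_twist hb (by simp [hgT, hfx]) hST (hu.contDiffAt (hU.mem_nhds hx)),
    hbx, hgT]
  field_simp
end

section
/- Let A be a real polynomial of degree at most 4, and let 0 < α₁ < α₂ be real numbers. Assume A(α₁) = A(α₂) = 0, A'(α₁) > 0, A'(α₂) < 0, and A''(0) > 0. Then A(ξ) > 0 for every ξ ∈ (α₁, α₂). -/
open Polynomial Set

/-- Auxiliary: a polynomial of natDegree ≤ 2 with two distinct positive roots and
positive value at 0 is positive beyond the larger root. -/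
lemma quad_pos_beyond (Q : Polynomial ℝ) (hdeg : Q.natDegree ≤ 2)
    (r₁ r₂ : ℝ) (h1 : 0 < r₁) (h12 : r₁ < r₂)
    (hr1 : Q.eval r₁ = 0) (hr2 : Q.eval r₂ = 0) (h0 : 0 < Q.eval 0) :
    ∀ x, r₂ < x → 0 < Q.eval x := by
  have hev : ∀ x : ℝ, Q.eval x = Q.coeff 0 + Q.coeff 1 * x + Q.coeff 2 * x ^ 2 := by
    intro x
    rw [Polynomial.eval_eq_sum_range' (lt_of_le_of_lt hdeg (by norm_num : (2:ℕ) < 3))]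
    simp only [Finset.sum_range_succ, Finset.sum_range_zero, zero_add]
    ring
  set a := Q.coeff 2
  set b := Q.coeff 1
  set c := Q.coeff 0
  rw [hev] at hr1 hr2 h0
  simp only [mul_zero, add_zero, zero_pow, ne_eq] at h0
  norm_num at h0
  -- from the two root equations derive b and c in terms of a
  have hne : r₁ - r₂ ≠ 0 := by intro h; nlinarith
  have hb : b = -a * (r₁ + r₂) := by
    have hmul : (r₁ - r₂) * (b + a * (r₁ + r₂)) = 0 := by nlinarith [hr1, hr2]
    rcases mul_eq_zero.1 hmul with h | h
    · exact absurd h hne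
    · linarith
  have hc : c = a * (r₁ * r₂) := by nlinarith [hr1, hb]
  have ha : 0 < a := by
    have hrr : 0 < r₁ * r₂ := mul_pos h1 (h1.trans h12)
    nlinarith [h0, hc]
  intro x hx
  rw [hev]
  have h1x : 0 < x - r₁ := by linarith
  have h2x : 0 < x - r₂ := by linarith
  nlinarith [mul_pos (mul_pos ha h1x) h2x, hb, hc]

/-- Positivity criterion for the Calabi-type boundary polynomial:
if A is a real polynomial of degree ≤ 4 with 0 < α₁ < α₂, A(α₁) = A(α₂) = 0,
A'(α₁) > 0, A'(α₂) < 0 and A''(0) > 0, then A > 0 on (α₁, α₂). -/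
theorem stmt7 (A : Polynomial ℝ) (hdeg : A.natDegree ≤ 4)
    (α₁ α₂ : ℝ) (hα₁ : 0 < α₁) (hα : α₁ < α₂)
    (h1 : A.eval α₁ = 0) (h2 : A.eval α₂ = 0)
    (h1' : 0 < (derivative A).eval α₁)
    (h2' : (derivative A).eval α₂ < 0)
    (h'' : 0 < (derivative (derivative A)).eval 0) :
    ∀ ξ ∈ Set.Ioo α₁ α₂, 0 < A.eval ξ := by
  by_contra hcon
  push_neg at hcon
  obtain ⟨ξ₀, hξ₀, hξ₀le⟩ := hcon
  set f : ℝ → ℝ := fun x => A.eval x with hf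
  set g : ℝ → ℝ := fun x => (derivative A).eval x with hg
  have hderf : ∀ x : ℝ, deriv f x = g x := fun x => Polynomial.deriv A
  have hderg : ∀ x : ℝ, deriv g x = (derivative (derivative A)).eval x :=
    fun x => Polynomial.deriv (derivative A)
  have hcf : Continuous f := A.continuous_aeval
  have hcg : Continuous g := (derivative A).continuous_aeval
  have hdf : Differentiable ℝ f := A.differentiable
  have hdg : Differentiable ℝ g := (derivative A).differentiable
  -- get a point μ in the open interval with f μ ≤ 0 and g μ = 0
  obtain ⟨μ, hμIoo, hμle, hμder⟩ :
      ∃ μ ∈ Set.Ioo α₁ α₂, f μ ≤ 0 ∧ g μ = 0 := by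
    obtain ⟨m, hm, hmin⟩ := isCompact_Icc.exists_isMinOn (Set.nonempty_Icc.2 hα.le)
      hcf.continuousOn
    have hξIcc : ξ₀ ∈ Set.Icc α₁ α₂ := Set.Ioo_subset_Icc_self hξ₀
    by_cases hAm : f m < 0
    · have hm1 : α₁ < m := by
        rcases (lt_or_eq_of_le hm.1).symm with h | h
        · rw [← h] at hAm; simp only [hf, h1] at hAm; linarith [hAm]
        · exact h
      have hm2 : m < α₂ := by
        rcases (lt_or_eq_of_le hm.2) with h | h
        · exact h
        · rw [h] at hAm; simp only [hf, h2] at hAm; linarith [hAm]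
      have hloc : IsLocalMin f m := hmin.isLocalMin (Icc_mem_nhds hm1 hm2)
      refine ⟨m, ⟨hm1, hm2⟩, hAm.le, ?_⟩
      rw [← hderf m]; exact hloc.deriv_eq_zero
    · push_neg at hAm
      have h0 : f ξ₀ = 0 := le_antisymm hξ₀le (le_trans hAm (hmin hξIcc))
      have hminξ : IsMinOn f (Set.Icc α₁ α₂) ξ₀ := by
        intro x hx
        simp only [Set.mem_setOf_eq, h0]
        exact le_trans hAm (hmin hx)
      have hloc : IsLocalMin f ξ₀ := hminξ.isLocalMin (Icc_mem_nhds hξ₀.1 hξ₀.2)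
      refine ⟨ξ₀, hξ₀, le_of_eq h0, ?_⟩
      rw [← hderf ξ₀]; exact hloc.deriv_eq_zero
  -- MVT on [α₁, μ] gives a point where g ≤ 0
  obtain ⟨c₁, hc₁, hc₁v⟩ := exists_deriv_eq_slope f hμIoo.1 hcf.continuousOn
    hdf.differentiableOn
  have hgc₁ : g c₁ ≤ 0 := by
    rw [← hderf c₁, hc₁v]
    have : f α₁ = 0 := h1
    rw [this, sub_zero]
    apply div_nonpos_of_nonpos_of_nonneg hμle
    linarith [hμIoo.1]
  -- IVT: g has a zero t₁ in (α₁, μ)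
  obtain ⟨t₁, ht₁Icc, ht₁⟩ : ∃ t₁ ∈ Set.Icc α₁ c₁, g t₁ = 0 := by
    have := intermediate_value_Icc' (le_of_lt hc₁.1) hcg.continuousOn
      (Set.mem_Icc.2 ⟨hgc₁, le_of_lt h1'⟩)
    obtain ⟨t, ht, htv⟩ := this
    exact ⟨t, ht, htv⟩
  have ht₁l : α₁ < t₁ := by
    rcases lt_or_eq_of_le ht₁Icc.1 with h | h
    · exact h
    · exfalso; rw [← h] at ht₁; simp only [hg] at ht₁; linarith
  have ht₁r : t₁ < μ := lt_of_le_of_lt ht₁Icc.2 hc₁.2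
  -- MVT on [μ, α₂] gives a point where g ≥ 0
  obtain ⟨c₂, hc₂, hc₂v⟩ := exists_deriv_eq_slope f hμIoo.2 hcf.continuousOn
    hdf.differentiableOn
  have hgc₂ : 0 ≤ g c₂ := by
    rw [← hderf c₂, hc₂v]
    have : f α₂ = 0 := h2
    rw [this, zero_sub]
    apply div_nonneg (by linarith) (by linarith [hμIoo.2])
  -- IVT: g has a zero t₃ in (μ, α₂)
  obtain ⟨t₃, ht₃Icc, ht₃⟩ : ∃ t₃ ∈ Set.Icc c₂ α₂, g t₃ = 0 := by
    have := intermediate_value_Icc' (le_of_lt hc₂.2) hcg.continuousOn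
      (Set.mem_Icc.2 ⟨le_of_lt h2', hgc₂⟩)
    obtain ⟨t, ht, htv⟩ := this
    exact ⟨t, ht, htv⟩
  have ht₃r : t₃ < α₂ := by
    rcases lt_or_eq_of_le ht₃Icc.2 with h | h
    · exact h
    · exfalso; rw [h] at ht₃; simp only [hg] at ht₃; linarith
  have ht₃l : μ < t₃ := lt_of_lt_of_le hc₂.1 ht₃Icc.1
  -- Rolle on g over [t₁, μ] and [μ, t₃]
  obtain ⟨r₁, hr₁, hr₁v⟩ := exists_deriv_eq_zero ht₁r hcg.continuousOn (ht₁.trans hμder.symm)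
  obtain ⟨r₂, hr₂, hr₂v⟩ := exists_deriv_eq_zero ht₃l hcg.continuousOn (hμder.trans ht₃.symm)
  rw [hderg] at hr₁v hr₂v
  -- degree bound for the second derivative
  have hdeg2 : (derivative (derivative A)).natDegree ≤ 2 := by
    have h3 : (derivative A).natDegree ≤ 3 :=
      le_trans (natDegree_derivative_le A) (by omega)
    exact le_trans (natDegree_derivative_le (derivative A)) (by omega)
  have hr₁pos : 0 < r₁ := lt_trans hα₁ (lt_trans ht₁l hr₁.1)
  have hr₁₂ : r₁ < r₂ := lt_trans hr₁.2 hr₂.1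
  have key := quad_pos_beyond (derivative (derivative A)) hdeg2 r₁ r₂ hr₁pos hr₁₂ hr₁v hr₂v h''
  -- g is strictly monotone on [t₃, α₂]
  have hsm : StrictMonoOn g (Set.Icc t₃ α₂) := by
    apply strictMonoOn_of_deriv_pos (convex_Icc _ _) hcg.continuousOn
    intro x hx
    rw [interior_Icc] at hx
    rw [hderg]
    exact key x (lt_trans hr₂.2 hx.1)
  have := hsm (Set.left_mem_Icc.2 ht₃r.le) (Set.right_mem_Icc.2 ht₃r.le) ht₃r
  rw [ht₃] at this
  simp only [hg] at this
  linarith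
end

section
/- Let A and B be real polynomials of degree at most 4 such that deg(A + B) ≤ 1, and let 0 < β₁ < β₂ < α₁ < α₂ be real numbers. Assume A(α₁) = A(α₂) = 0, A'(α₁) > 0, A'(α₂) < 0, B(β₁) = B(β₂) = 0, B'(β₁) > 0, and B'(β₂) < 0. Then A(ξ) > 0 for every ξ ∈ (α₁, α₂) and B(η) > 0 for every η ∈ (β₁, β₂). -/
open Polynomial Filter Set

lemma slope_right (P : ℝ[X]) {t : ℝ} (h0 : P.eval t = 0) (h1 : 0 < (derivative P).eval t)
    {b : ℝ} (hb : t < b) : ∃ x, t < x ∧ x < b ∧ 0 < P.eval x := by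
  have hd : HasDerivAt (fun x => P.eval x) ((derivative P).eval t) t := P.hasDerivAt t
  have hs := hasDerivAt_iff_tendsto_slope.mp hd
  have hs' : Tendsto (slope (fun x => P.eval x) t) (nhdsWithin t (Set.Ioi t)) (nhds ((derivative P).eval t)) :=
    hs.mono_left (nhdsWithin_mono t (fun x hx => ne_of_gt hx))
  have hev : ∀ᶠ x in nhdsWithin t (Set.Ioi t), 0 < slope (fun x => P.eval x) t x :=
    hs'.eventually (eventually_gt_nhds h1)
  have hmem : ∀ᶠ x in nhdsWithin t (Set.Ioi t), x ∈ Set.Ioo t b :=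
    eventually_of_mem (Ioo_mem_nhdsGT_of_mem ⟨le_refl t, hb⟩) (fun x hx => hx)
  obtain ⟨x, hx1, hx2⟩ := (hev.and hmem).exists
  refine ⟨x, hx2.1, hx2.2, ?_⟩
  have heq : slope (fun x => P.eval x) t x = P.eval x / (x - t) := by
    simp [slope_def_field, h0]
  rw [heq] at hx1
  rcases div_pos_iff.mp hx1 with ⟨h,_⟩|⟨_,h⟩
  · exact h
  · have := hx2.1; linarith

lemma slope_left (P : ℝ[X]) {t : ℝ} (h0 : P.eval t = 0) (h1 : 0 < (derivative P).eval t)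
    {a : ℝ} (ha : a < t) : ∃ x, a < x ∧ x < t ∧ P.eval x < 0 := by
  have hd : HasDerivAt (fun x => P.eval x) ((derivative P).eval t) t := P.hasDerivAt t
  have hs := hasDerivAt_iff_tendsto_slope.mp hd
  have hs' : Tendsto (slope (fun x => P.eval x) t) (nhdsWithin t (Set.Iio t)) (nhds ((derivative P).eval t)) :=
    hs.mono_left (nhdsWithin_mono t (fun x hx => ne_of_lt hx))
  have hev : ∀ᶠ x in nhdsWithin t (Set.Iio t), 0 < slope (fun x => P.eval x) t x :=
    hs'.eventually (eventually_gt_nhds h1)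
  have hmem : ∀ᶠ x in nhdsWithin t (Set.Iio t), x ∈ Set.Ioo a t :=
    eventually_of_mem (Ioo_mem_nhdsLT_of_mem ⟨ha, le_refl t⟩) (fun x hx => hx)
  obtain ⟨x, hx1, hx2⟩ := (hev.and hmem).exists
  refine ⟨x, hx2.1, hx2.2, ?_⟩
  have heq : slope (fun x => P.eval x) t x = P.eval x / (x - t) := by
    simp [slope_def_field, h0]
  rw [heq] at hx1
  rcases div_pos_iff.mp hx1 with ⟨_,h⟩|⟨h,_⟩
  · have := hx2.2; linarith
  · exact h

lemma slope_right_neg (P : ℝ[X]) {t : ℝ} (h0 : P.eval t = 0) (h1 : (derivative P).eval t < 0)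
    {b : ℝ} (hb : t < b) : ∃ x, t < x ∧ x < b ∧ P.eval x < 0 := by
  obtain ⟨x, h1, h2, h3⟩ := slope_right (-P) (by simp [h0]) (by simp; linarith) hb
  exact ⟨x, h1, h2, by simp at h3; linarith⟩

lemma slope_left_pos (P : ℝ[X]) {t : ℝ} (h0 : P.eval t = 0) (h1 : (derivative P).eval t < 0)
    {a : ℝ} (ha : a < t) : ∃ x, a < x ∧ x < t ∧ 0 < P.eval x := by
  obtain ⟨x, h1, h2, h3⟩ := slope_left (-P) (by simp [h0]) (by simp; linarith) ha
  exact ⟨x, h1, h2, by simp at h3; linarith⟩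

lemma count_roots_pos {P : ℝ[X]} (hP : P ≠ 0) {a : ℝ} (ha : P.IsRoot a) :
    1 ≤ P.roots.count a := by
  rw [Polynomial.count_roots]
  exact (Polynomial.rootMultiplicity_pos hP).mpr ha

lemma quad_roots_le (P : ℝ[X]) (hP : P ≠ 0) {a b c d : ℝ}
    (hab : a < b) (hbc : b < c) (hcd : c < d)
    (ha : P.IsRoot a) (hb : P.IsRoot b) (hc : P.IsRoot c) (hd : P.IsRoot d) :
    ({a, b, c, d} : Multiset ℝ) ≤ P.roots := by
  rw [Multiset.le_iff_count]
  intro x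
  have h1 := count_roots_pos hP ha
  have h2 := count_roots_pos hP hb
  have h3 := count_roots_pos hP hc
  have h4 := count_roots_pos hP hd
  simp only [Multiset.insert_eq_cons, Multiset.count_cons, Multiset.count_singleton]
  by_cases e1 : x = a <;> by_cases e2 : x = b <;> by_cases e3 : x = c <;> by_cases e4 : x = d <;>
    subst_vars <;> simp_all <;> first | omega | linarith

lemma quad_roots_le2 (P : ℝ[X]) (hP : P ≠ 0) {a b c : ℝ}
    (hab : a < b) (hbc : b < c)
    (ha : P.IsRoot a) (hc : P.IsRoot c) (hb2 : 2 ≤ P.rootMultiplicity b) :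
    ({a, b, b, c} : Multiset ℝ) ≤ P.roots := by
  rw [Multiset.le_iff_count]
  intro x
  have h1 := count_roots_pos hP ha
  have h3 := count_roots_pos hP hc
  have h2 : 2 ≤ P.roots.count b := by rw [Polynomial.count_roots]; exact hb2
  simp only [Multiset.insert_eq_cons, Multiset.count_cons, Multiset.count_singleton]
  by_cases e1 : x = a <;> by_cases e2 : x = b <;> by_cases e3 : x = c <;>
    subst_vars <;> simp_all <;> first | omega | linarith

lemma roots_eq_of_le_four (P : ℝ[X]) (hP : P ≠ 0) (hdeg : P.natDegree ≤ 4)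
    (s : Multiset ℝ) (hs : s ≤ P.roots) (hcard : Multiset.card s = 4) :
    P.roots = s ∧ P.natDegree = 4 := by
  have h1 : Multiset.card P.roots ≤ P.natDegree := Polynomial.card_roots' P
  have h2 : 4 ≤ Multiset.card P.roots := hcard ▸ Multiset.card_le_card hs
  constructor
  · exact (Multiset.eq_of_le_of_card_le hs (by omega)).symm
  · omega

lemma inner_struct (P : Polynomial ℝ) (hdeg : P.natDegree ≤ 4) {u v : ℝ} (huv : u < v)
    (h0u : P.eval u = 0) (h0v : P.eval v = 0)
    (h1u : 0 < (Polynomial.derivative P).eval u) (h1v : (Polynomial.derivative P).eval v < 0)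
    (hfail : ∃ ξ ∈ Set.Ioo u v, P.eval ξ ≤ 0) :
    ∃ r₁ r₂, u < r₁ ∧ r₁ ≤ r₂ ∧ r₂ < v ∧ P.roots = {u, r₁, r₂, v} ∧ P.natDegree = 4 := by
  have hP : P ≠ 0 := fun h => by simp [h] at h1u
  have hcont : Continuous fun x => P.eval x := P.continuous
  by_cases hneg : ∃ ζ ∈ Set.Ioo u v, P.eval ζ < 0
  · obtain ⟨ζ, hζ, hζneg⟩ := hneg
    obtain ⟨x₀, hx₀1, hx₀2, hx₀3⟩ := slope_right P h0u h1u hζ.1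
    obtain ⟨x₁, hx₁1, hx₁2, hx₁3⟩ := slope_left_pos P h0v h1v hζ.2
    have h01 : (0:ℝ) ∈ Set.Ioo (P.eval ζ) (P.eval x₀) := ⟨hζneg, hx₀3⟩
    obtain ⟨r₁, hr₁mem, hr₁⟩ := intermediate_value_Ioo' (le_of_lt hx₀2) hcont.continuousOn h01
    have h02 : (0:ℝ) ∈ Set.Ioo (P.eval ζ) (P.eval x₁) := ⟨hζneg, hx₁3⟩
    obtain ⟨r₂, hr₂mem, hr₂⟩ := intermediate_value_Ioo (le_of_lt hx₁1) hcont.continuousOn h02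
    have hle : ({u, r₁, r₂, v} : Multiset ℝ) ≤ P.roots :=
      quad_roots_le P hP (by linarith [hr₁mem.1]) (by linarith [hr₁mem.2, hr₂mem.1])
        (by linarith [hr₂mem.2]) h0u hr₁ hr₂ h0v
    obtain ⟨hroots, hnd⟩ := roots_eq_of_le_four P hP hdeg _ hle rfl
    exact ⟨r₁, r₂, by linarith [hr₁mem.1], by linarith [hr₁mem.2, hr₂mem.1],
      by linarith [hr₂mem.2], hroots, hnd⟩
  · push_neg at hneg
    obtain ⟨ξ, hξ, hξle⟩ := hfail
    have hξ0 : P.eval ξ = 0 := le_antisymm hξle (hneg ξ hξ)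
    have hmin : IsLocalMin (fun x => P.eval x) ξ := by
      filter_upwards [isOpen_Ioo.mem_nhds hξ] with x hx
      rw [hξ0]; exact hneg x hx
    have hder : (Polynomial.derivative P).eval ξ = 0 := hmin.hasDerivAt_eq_zero (P.hasDerivAt ξ)
    have hmult : 2 ≤ P.rootMultiplicity ξ :=
      (Polynomial.one_lt_rootMultiplicity_iff_isRoot hP).mpr ⟨hξ0, hder⟩
    have hle : ({u, ξ, ξ, v} : Multiset ℝ) ≤ P.roots :=
      quad_roots_le2 P hP hξ.1 hξ.2 h0u h0v hmult
    obtain ⟨hroots, hnd⟩ := roots_eq_of_le_four P hP hdeg _ hle rfl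
    exact ⟨ξ, ξ, hξ.1, le_refl ξ, hξ.2, hroots, hnd⟩

lemma neg_outside (P : Polynomial ℝ) (hP : P ≠ 0) {u v r₁ r₂ : ℝ}
    (h1 : u < r₁) (h2 : r₁ ≤ r₂) (h3 : r₂ < v)
    (hroots : P.roots = {u, r₁, r₂, v})
    (h0u : P.eval u = 0) (h0v : P.eval v = 0)
    (h1u : 0 < (Polynomial.derivative P).eval u) (h1v : (Polynomial.derivative P).eval v < 0) :
    (∀ x, x < u → P.eval x < 0) ∧ (∀ x, v < x → P.eval x < 0) := by
  have hcont : Continuous fun x => P.eval x := P.continuous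
  have hnr : ∀ x, P.eval x = 0 → u ≤ x ∧ x ≤ v := by
    intro x hx
    have hmem : x ∈ P.roots := by
      rw [Polynomial.mem_roots hP]; exact hx
    rw [hroots] at hmem
    simp only [Multiset.insert_eq_cons, Multiset.mem_cons, Multiset.mem_singleton] at hmem
    rcases hmem with h|h|h|h <;> subst h <;> constructor <;> linarith
  constructor
  · intro x hx
    obtain ⟨w, hw1, hw2, hw3⟩ := slope_left P h0u h1u hx
    by_contra hge
    push_neg at hge
    rcases lt_or_eq_of_le hge with hpos | heq
    · have h0 : (0:ℝ) ∈ Set.Ioo (P.eval w) (P.eval x) := ⟨hw3, hpos⟩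
      obtain ⟨y, hymem, hy⟩ := intermediate_value_Ioo' (le_of_lt hw1) hcont.continuousOn h0
      have := (hnr y hy).1
      linarith [hymem.2]
    · have := (hnr x heq.symm).1
      linarith
  · intro x hx
    obtain ⟨w, hw1, hw2, hw3⟩ := slope_right_neg P h0v h1v hx
    by_contra hge
    push_neg at hge
    rcases lt_or_eq_of_le hge with hpos | heq
    · have h0 : (0:ℝ) ∈ Set.Ioo (P.eval w) (P.eval x) := ⟨hw3, hpos⟩
      obtain ⟨y, hymem, hy⟩ := intermediate_value_Ioo (le_of_lt hw2) hcont.continuousOn h0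
      have := (hnr y hy).2
      linarith [hymem.1]
    · have := (hnr x heq.symm).2
      linarith

lemma lc_neg_of_neg_far (P : Polynomial ℝ) (hnd : P.natDegree = 4) {v : ℝ}
    (hneg : ∀ x, v < x → P.eval x < 0) : P.leadingCoeff < 0 := by
  have hP : P ≠ 0 := fun h => by simp [h] at hnd
  have hdegpos : 0 < P.degree := by
    rw [Polynomial.degree_eq_natDegree hP, hnd]
    norm_num
  by_contra hge
  push_neg at hge
  have htop := Polynomial.tendsto_atTop_of_leadingCoeff_nonneg P hdegpos hge
  obtain ⟨x, hx1, hx2⟩ := ((htop.eventually_gt_atTop 0).and (eventually_gt_atTop v)).exists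
  exact absurd hx1 (not_lt.mpr (le_of_lt (hneg x hx2)))

lemma outer_struct (P : Polynomial ℝ) (hnd : P.natDegree = 4) (hlc : 0 < P.leadingCoeff)
    {u v : ℝ} (huv : u < v)
    (h0u : P.eval u = 0) (h0v : P.eval v = 0)
    (h1u : 0 < (Polynomial.derivative P).eval u) (h1v : (Polynomial.derivative P).eval v < 0) :
    ∃ g' g, g' < u ∧ v < g ∧ P.roots = {g', u, v, g} := by
  have hP : P ≠ 0 := fun h => by simp [h] at hnd
  have hcont : Continuous fun x => P.eval x := P.continuous
  have hdegpos : 0 < P.degree := by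
    rw [Polynomial.degree_eq_natDegree hP, hnd]; norm_num
  have htop := Polynomial.tendsto_atTop_of_leadingCoeff_nonneg P hdegpos (le_of_lt hlc)
  obtain ⟨xp, hxp1, hxp2⟩ := ((htop.eventually_gt_atTop 0).and (eventually_gt_atTop v)).exists
  -- point far to the left with positive value
  set Q : Polynomial ℝ := P.comp (-Polynomial.X) with hQ
  have hndX : (-Polynomial.X : Polynomial ℝ).natDegree = 1 := by
    rw [Polynomial.natDegree_neg, Polynomial.natDegree_X]
  have hndQ : Q.natDegree = 4 := by
    rw [hQ, Polynomial.natDegree_comp, hndX, hnd, mul_one]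
  have hQ0 : Q ≠ 0 := fun h => by simp [h] at hndQ
  have hlcQ : 0 < Q.leadingCoeff := by
    rw [hQ, Polynomial.leadingCoeff_comp (by rw [hndX]; norm_num), hnd]
    have : (-Polynomial.X : Polynomial ℝ).leadingCoeff = -1 := by
      rw [Polynomial.leadingCoeff_neg, Polynomial.leadingCoeff_X]
    rw [this]
    norm_num
    exact hlc
  have hdegQ : 0 < Q.degree := by
    rw [Polynomial.degree_eq_natDegree hQ0, hndQ]; norm_num
  have htopQ := Polynomial.tendsto_atTop_of_leadingCoeff_nonneg Q hdegQ (le_of_lt hlcQ)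
  obtain ⟨y, hy1, hy2⟩ := ((htopQ.eventually_gt_atTop 0).and (eventually_gt_atTop (-u))).exists
  have heQ : Q.eval y = P.eval (-y) := by
    rw [hQ, Polynomial.eval_comp, Polynomial.eval_neg, Polynomial.eval_X]
  have hyval : 0 < P.eval (-y) := heQ ▸ hy1
  have hyu : -y < u := by linarith
  obtain ⟨w, hw1, hw2, hw3⟩ := slope_left P h0u h1u hyu
  have h0l : (0:ℝ) ∈ Set.Ioo (P.eval w) (P.eval (-y)) := ⟨hw3, hyval⟩
  obtain ⟨g', hg'mem, hg'⟩ := intermediate_value_Ioo' (le_of_lt hw1) hcont.continuousOn h0l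
  obtain ⟨w', hw'1, hw'2, hw'3⟩ := slope_right_neg P h0v h1v hxp2
  have h0r : (0:ℝ) ∈ Set.Ioo (P.eval w') (P.eval xp) := ⟨hw'3, hxp1⟩
  obtain ⟨g, hgmem, hg⟩ := intermediate_value_Ioo (le_of_lt hw'2) hcont.continuousOn h0r
  have hle : ({g', u, v, g} : Multiset ℝ) ≤ P.roots :=
    quad_roots_le P hP (by linarith [hg'mem.2]) huv (by linarith [hgmem.1]) hg' h0u h0v hg
  obtain ⟨hroots, -⟩ := roots_eq_of_le_four P hP (le_of_eq hnd) _ hle rfl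
  exact ⟨g', g, by linarith [hg'mem.2], by linarith [hgmem.1], hroots⟩

lemma coeff_of_roots (P : ℝ[X]) (hd : P.natDegree = 4) {a b c d : ℝ}
    (hroots : P.roots = {a, b, c, d}) :
    P.coeff 3 = P.leadingCoeff * (-(a+b+c+d)) ∧
    P.coeff 2 = P.leadingCoeff * (a*b+a*c+a*d+b*c+b*d+c*d) := by
  have hcard : Multiset.card P.roots = P.natDegree := by rw [hroots, hd]; rfl
  have hfact := Polynomial.C_leadingCoeff_mul_prod_multiset_X_sub_C hcard
  rw [hroots] at hfact
  have hexp : ((({a, b, c, d} : Multiset ℝ)).map (fun x => X - C x)).prod =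
      X^4 - C (a+b+c+d) * X^3 + C (a*b+a*c+a*d+b*c+b*d+c*d) * X^2
        - C (a*b*c+a*b*d+a*c*d+b*c*d) * X + C (a*b*c*d) := by
    simp only [Multiset.insert_eq_cons, Multiset.map_cons, Multiset.prod_cons,
      Multiset.map_singleton, Multiset.prod_singleton, map_add, map_mul]
    ring
  rw [hexp] at hfact
  constructor <;> (conv_lhs => rw [← hfact]) <;>
    · simp only [coeff_C_mul, coeff_add, coeff_sub, coeff_X_pow, coeff_C, coeff_X]
      norm_num
      try ring

lemma varlem {p q s₁ s₂ g' w₁ w₂ g m : ℝ}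
    (hs₁ : p ≤ s₁) (hs₁' : s₁ ≤ q) (hs₂ : p ≤ s₂) (hs₂' : s₂ ≤ q)
    (hw : w₁ < w₂) (hwp : w₂ < p) (hg' : g' < w₁) (hg : w₂ < g)
    (hsum1 : p + q + s₁ + s₂ = 4*m) (hsum2 : g' + w₁ + w₂ + g = 4*m) :
    p^2 + q^2 + s₁^2 + s₂^2 < g'^2 + w₁^2 + w₂^2 + g^2 := by
  have hv : p ≤ m := by linarith
  have hq : m ≤ q := by linarith
  have k1 : 0 ≤ (s₁ - p)*(q - s₁) := mul_nonneg (by linarith) (by linarith)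
  have k2 : 0 ≤ (s₂ - p)*(q - s₂) := mul_nonneg (by linarith) (by linarith)
  have hu3v : q - m ≤ 3*(m-p) := by linarith
  have e1 : (p-m)^2+(q-m)^2+(s₁-m)^2+(s₂-m)^2 ≤ 4*((q-m)*(m-p)) := by nlinarith [k1, k2]
  have e2 : 4*((q-m)*(m-p)) ≤ 12*(m-p)^2 := by nlinarith [hu3v, hv, sub_nonneg.mpr hv]
  have e3 : 12*(m-p)^2 < 12*(m-w₂)^2 := by nlinarith [hwp, hv]
  have hABC : g - m = (m-g') + (m-w₁) + (m-w₂) := by linarith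
  have hA : m - w₁ < m - g' := by linarith
  have hB : m - w₂ < m - w₁ := by linarith
  have hC : m - p < m - w₂ := by linarith
  have hC0 : (0:ℝ) ≤ m - w₂ := by linarith
  have e4 : 12*(m-w₂)^2 ≤ (g'-m)^2+(w₁-m)^2+(w₂-m)^2+(g-m)^2 := by
    nlinarith [mul_nonneg hC0 hC0, sq_nonneg ((m-g') - (m-w₂)), sq_nonneg ((m-w₁) - (m-w₂)),
      mul_nonneg (by linarith : (0:ℝ) ≤ (m-g') - (m-w₂)) hC0,
      mul_nonneg (by linarith : (0:ℝ) ≤ (m-w₁) - (m-w₂)) hC0]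
  have i1 : p^2+q^2+s₁^2+s₂^2 = (p-m)^2+(q-m)^2+(s₁-m)^2+(s₂-m)^2 + 4*m^2 := by
    linear_combination (2*m) * hsum1
  have i2 : g'^2+w₁^2+w₂^2+g^2 = (g'-m)^2+(w₁-m)^2+(w₂-m)^2+(g-m)^2 + 4*m^2 := by
    linear_combination (2*m) * hsum2
  linarith [e1, e2, e3, e4]

lemma partner (Pa Pb : Polynomial ℝ) (hd : (Pa + Pb).degree ≤ 1) (hb4 : Pb.natDegree ≤ 4)
    (hnda : Pa.natDegree = 4) :
    Pb.natDegree = 4 ∧ Pb.leadingCoeff = -Pa.leadingCoeff ∧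
      Pa.coeff 3 + Pb.coeff 3 = 0 ∧ Pa.coeff 2 + Pb.coeff 2 = 0 := by
  have hc : ∀ k : ℕ, 2 ≤ k → Pa.coeff k + Pb.coeff k = 0 := by
    intro k hk
    have h4 : (Pa + Pb).coeff k = 0 := by
      apply Polynomial.coeff_eq_zero_of_degree_lt
      refine lt_of_le_of_lt hd ?_
      exact_mod_cast by exact_mod_cast Nat.lt_of_lt_of_le (by norm_num) hk
    rwa [Polynomial.coeff_add] at h4
  have hPa : Pa ≠ 0 := fun h => by simp [h] at hnda
  have hlcne : Pa.coeff 4 ≠ 0 := by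
    rw [← hnda]
    exact Polynomial.leadingCoeff_ne_zero.mpr hPa
  have hb4' : Pb.coeff 4 = -Pa.coeff 4 := by linarith [hc 4 (by norm_num)]
  have hbne : Pb.coeff 4 ≠ 0 := by rw [hb4']; simpa using hlcne
  have hnd : Pb.natDegree = 4 :=
    le_antisymm hb4 (Polynomial.le_natDegree_of_ne_zero hbne)
  refine ⟨hnd, ?_, hc 3 (by norm_num), hc 2 (by norm_num)⟩
  rw [Polynomial.leadingCoeff, hnd, hb4', Polynomial.leadingCoeff, hnda]

/-- Positivity of an orthotoric extremal pair: if A, B are real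
polynomials of degree ≤ 4 with deg(A + B) ≤ 1, 0 < β₁ < β₂ < α₁ < α₂,
A(α₁) = A(α₂) = 0, A'(α₁) > 0, A'(α₂) < 0, B(β₁) = B(β₂) = 0, B'(β₁) > 0,
B'(β₂) < 0, then A > 0 on (α₁, α₂) and B > 0 on (β₁, β₂). -/
theorem stmt8 (A B : Polynomial ℝ) (hA : A.natDegree ≤ 4) (hB : B.natDegree ≤ 4)
    (hAB : (A + B).degree ≤ 1)
    (β₁ β₂ α₁ α₂ : ℝ) (hβ₁ : 0 < β₁) (hβ : β₁ < β₂) (hβα : β₂ < α₁) (hα : α₁ < α₂)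
    (hA1 : A.eval α₁ = 0) (hA2 : A.eval α₂ = 0)
    (hA1' : 0 < (derivative A).eval α₁) (hA2' : (derivative A).eval α₂ < 0)
    (hB1 : B.eval β₁ = 0) (hB2 : B.eval β₂ = 0)
    (hB1' : 0 < (derivative B).eval β₁) (hB2' : (derivative B).eval β₂ < 0) :
    (∀ ξ ∈ Set.Ioo α₁ α₂, 0 < A.eval ξ) ∧ (∀ η ∈ Set.Ioo β₁ β₂, 0 < B.eval η) := by
  have hAne : A ≠ 0 := fun h => by simp [h] at hA1'
  have hBne : B ≠ 0 := fun h => by simp [h] at hB1'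
  by_cases hAp : ∀ ξ ∈ Set.Ioo α₁ α₂, 0 < A.eval ξ
  · by_cases hBp : ∀ η ∈ Set.Ioo β₁ β₂, 0 < B.eval η
    · exact ⟨hAp, hBp⟩
    · exfalso
      push_neg at hBp
      -- case (ii): B fails, A holds
      obtain ⟨s₁, s₂, hs1, hs2, hs3, hrootsB, hndB⟩ :=
        inner_struct B hB hβ hB1 hB2 hB1' hB2' hBp
      obtain ⟨hnegBl, hnegBr⟩ :=
        neg_outside B hBne hs1 hs2 hs3 hrootsB hB1 hB2 hB1' hB2'
      have hlcB : B.leadingCoeff < 0 := lc_neg_of_neg_far B hndB hnegBr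
      obtain ⟨hndA, hlcA, hc3, hc2⟩ := partner B A (by rwa [add_comm]) hA hndB
      have hlcApos : 0 < A.leadingCoeff := by rw [hlcA]; linarith
      obtain ⟨γ'', γ''', hγ''1, hγ''2, hrootsA⟩ :=
        outer_struct A hndA hlcApos hα hA1 hA2 hA1' hA2'
      obtain ⟨hA3, hA2c⟩ := coeff_of_roots A hndA hrootsA
      obtain ⟨hB3, hB2c⟩ := coeff_of_roots B hndB hrootsB
      have hlcBne : B.leadingCoeff ≠ 0 := ne_of_lt hlcB
      set Sa : ℝ := γ'' + α₁ + α₂ + γ''' with hSa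
      set Sb : ℝ := β₁ + s₁ + s₂ + β₂ with hSb
      set Ea : ℝ := γ''*α₁ + γ''*α₂ + γ''*γ''' + α₁*α₂ + α₁*γ''' + α₂*γ''' with hEa
      set Eb : ℝ := β₁*s₁ + β₁*s₂ + β₁*β₂ + s₁*s₂ + s₁*β₂ + s₂*β₂ with hEb
      have he1' : B.leadingCoeff * (Sa - Sb) = 0 := by
        rw [hB3, hA3, hlcA] at hc3
        linear_combination hc3
      have he2' : B.leadingCoeff * (Ea - Eb) = 0 := by
        rw [hB2c, hA2c, hlcA] at hc2
        linear_combination -hc2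
      have he1 : Sa = Sb := by
        have := (mul_eq_zero.mp he1').resolve_left hlcBne
        linarith
      have he2 : Ea = Eb := by
        have := (mul_eq_zero.mp he2').resolve_left hlcBne
        linarith
      have hp2 : γ''^2 + α₁^2 + α₂^2 + γ'''^2 = β₁^2 + s₁^2 + s₂^2 + β₂^2 := by
        linear_combination (Sa + Sb) * he1 - 2 * he2
      have hvl := varlem (p := -β₂) (q := -β₁) (s₁ := -s₁) (s₂ := -s₂)
        (g' := -γ''') (w₁ := -α₂) (w₂ := -α₁) (g := -γ'') (m := -(Sa/4))
        (by linarith) (by linarith) (by linarith) (by linarith)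
        (by linarith) (by linarith) (by linarith) (by linarith)
        (by rw [he1, hSb]; ring) (by rw [hSa]; ring)
      simp only [neg_sq] at hvl
      linarith
  · exfalso
    push_neg at hAp
    obtain ⟨r₁, r₂, hr1, hr2, hr3, hrootsA, hndA⟩ :=
      inner_struct A hA hα hA1 hA2 hA1' hA2' hAp
    obtain ⟨hnegAl, hnegAr⟩ :=
      neg_outside A hAne hr1 hr2 hr3 hrootsA hA1 hA2 hA1' hA2'
    have hlcA : A.leadingCoeff < 0 := lc_neg_of_neg_far A hndA hnegAr
    obtain ⟨hndB, hlcB, hc3, hc2⟩ := partner A B hAB hB hndA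
    by_cases hBp : ∀ η ∈ Set.Ioo β₁ β₂, 0 < B.eval η
    · -- case (iii): A fails, B holds
      have hlcBpos : 0 < B.leadingCoeff := by rw [hlcB]; linarith
      obtain ⟨γ', γ, hγ1, hγ2, hrootsB⟩ :=
        outer_struct B hndB hlcBpos hβ hB1 hB2 hB1' hB2'
      obtain ⟨hA3, hA2c⟩ := coeff_of_roots A hndA hrootsA
      obtain ⟨hB3, hB2c⟩ := coeff_of_roots B hndB hrootsB
      have hlcAne : A.leadingCoeff ≠ 0 := ne_of_lt hlcA
      set Sa : ℝ := α₁ + r₁ + r₂ + α₂ with hSa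
      set Sb : ℝ := γ' + β₁ + β₂ + γ with hSb
      set Ea : ℝ := α₁*r₁ + α₁*r₂ + α₁*α₂ + r₁*r₂ + r₁*α₂ + r₂*α₂ with hEa
      set Eb : ℝ := γ'*β₁ + γ'*β₂ + γ'*γ + β₁*β₂ + β₁*γ + β₂*γ with hEb
      have he1' : A.leadingCoeff * (Sa - Sb) = 0 := by
        rw [hA3, hB3, hlcB] at hc3
        linear_combination -hc3
      have he2' : A.leadingCoeff * (Ea - Eb) = 0 := by
        rw [hA2c, hB2c, hlcB] at hc2
        linear_combination hc2
      have he1 : Sa = Sb := by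
        have := (mul_eq_zero.mp he1').resolve_left hlcAne
        linarith
      have he2 : Ea = Eb := by
        have := (mul_eq_zero.mp he2').resolve_left hlcAne
        linarith
      have hp2 : α₁^2 + r₁^2 + r₂^2 + α₂^2 = γ'^2 + β₁^2 + β₂^2 + γ^2 := by
        linear_combination (Sa + Sb) * he1 - 2 * he2
      have hvl := varlem (p := α₁) (q := α₂) (s₁ := r₁) (s₂ := r₂)
        (g' := γ') (w₁ := β₁) (w₂ := β₂) (g := γ) (m := Sa/4)
        (by linarith) (by linarith) (by linarith) (by linarith)
        hβ hβα hγ1 hγ2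
        (by rw [hSa]; ring) (by rw [he1, hSb]; ring)
      linarith
    · -- case (iv): both fail
      push_neg at hBp
      obtain ⟨s₁, s₂, hs1, hs2, hs3, hrootsB, hndB'⟩ :=
        inner_struct B hB hβ hB1 hB2 hB1' hB2' hBp
      obtain ⟨hnegBl, hnegBr⟩ :=
        neg_outside B hBne hs1 hs2 hs3 hrootsB hB1 hB2 hB1' hB2'
      have hlcB' : B.leadingCoeff < 0 := lc_neg_of_neg_far B hndB' hnegBr
      rw [hlcB] at hlcB'
      linarith
end

section
/- For each k ∈ {1,2,3,4}, the quartic polynomial F_k(p) = 4(1−p)²k² − 4(p−1)(p−2)pk + p⁴ has exactly two real roots r and s, and they satisfy 0 < r < s < 1. -/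
set_option maxHeartbeats 1000000


/-- The quartic F_k(p) = 4(1−p)²k² − 4(p−1)(p−2)pk + p⁴ attached to the
k-th Hirzebruch surface. -/
def FkQuartic (k : ℕ) (p : ℝ) : ℝ :=
  4 * (1 - p) ^ 2 * (k : ℝ) ^ 2 - 4 * (p - 1) * (p - 2) * p * (k : ℝ) + p ^ 4

/-- first factor in the substitution p = 1 - w². -/
def fAux (K w : ℝ) : ℝ := w ^ 4 + 2 * w ^ 3 + 2 * K * w ^ 2 - 2 * w - 1

/-- second factor in the substitution p = 1 - w². -/
def gAux (K w : ℝ) : ℝ := w ^ 4 - 2 * w ^ 3 + 2 * K * w ^ 2 + 2 * w - 1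

lemma factAux (k : ℕ) (w : ℝ) :
    FkQuartic k (1 - w ^ 2) = fAux (k : ℝ) w * gAux (k : ℝ) w := by
  unfold FkQuartic fAux gAux; ring

lemma fAux_unique {K a b : ℝ} (hK : 1 ≤ K) (ha : 0 < a) (hb : 0 < b)
    (hfa : fAux K a = 0) (hfb : fAux K b = 0) : a = b := by
  have key : (a - b) * (a * b * (a ^ 2 + a * b + b ^ 2 + 2 * a + 2 * b + 2 * K) + 1) = 0 := by
    unfold fAux at hfa hfb
    linear_combination b * hfa - a * hfb
  have hpos : 0 < a * b * (a ^ 2 + a * b + b ^ 2 + 2 * a + 2 * b + 2 * K) + 1 := by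
    nlinarith [mul_pos ha hb, sq_nonneg a, sq_nonneg b, mul_pos (mul_pos ha hb) (mul_pos ha hb)]
  have := mul_eq_zero.1 key
  rcases this with h | h
  · linarith
  · exact absurd h (ne_of_gt hpos)

lemma gAux_unique {K a b : ℝ} (hK : 1 ≤ K) (ha : 0 < a) (hb : 0 < b)
    (hfa : gAux K a = 0) (hfb : gAux K b = 0) : a = b := by
  have key : (a - b) * (a * b * (a ^ 2 + a * b + b ^ 2 - 2 * a - 2 * b + 2 * K) + 1) = 0 := by
    unfold gAux at hfa hfb
    linear_combination b * hfa - a * hfb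
  have hb2 : (0:ℝ) ≤ a ^ 2 + a * b + b ^ 2 - 2 * a - 2 * b + 2 * K := by
    nlinarith [sq_nonneg (a - 1), sq_nonneg (b - 1), mul_pos ha hb]
  have hpos : 0 < a * b * (a ^ 2 + a * b + b ^ 2 - 2 * a - 2 * b + 2 * K) + 1 := by
    nlinarith [mul_nonneg (mul_pos ha hb).le hb2]
  have := mul_eq_zero.1 key
  rcases this with h | h
  · linarith
  · exact absurd h (ne_of_gt hpos)

/-- For k ∈ {1,2,3,4}, the quartic F_k has exactly two real
roots r < s, and 0 < r < s < 1. -/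
theorem stmt12 (k : ℕ) (hk : k ∈ ({1, 2, 3, 4} : Set ℕ)) :
    ∃ r s : ℝ, 0 < r ∧ r < s ∧ s < 1 ∧
      FkQuartic k r = 0 ∧ FkQuartic k s = 0 ∧
      ∀ t : ℝ, FkQuartic k t = 0 → t = r ∨ t = s := by
  simp only [Set.mem_insert_iff, Set.mem_singleton_iff] at hk
  have hk1 : 1 ≤ k := by omega
  set K : ℝ := (k : ℝ) with hKdef
  have hK : (1:ℝ) ≤ K := by rw [hKdef]; exact_mod_cast hk1
  -- existence of a root of fAux in (0,1)
  have hf0 : fAux K 0 = -1 := by unfold fAux; ring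
  have hf1 : fAux K 1 = 2 * K := by unfold fAux; ring
  have hg0 : gAux K 0 = -1 := by unfold gAux; ring
  have hg1 : gAux K 1 = 2 * K := by unfold gAux; ring
  have hcontf : ContinuousOn (fAux K) (Set.Icc (0:ℝ) 1) := by
    apply Continuous.continuousOn; unfold fAux; continuity
  have hcontg : ContinuousOn (gAux K) (Set.Icc (0:ℝ) 1) := by
    apply Continuous.continuousOn; unfold gAux; continuity
  have hmemf : (0:ℝ) ∈ Set.Ioo (fAux K 0) (fAux K 1) := by
    rw [hf0, hf1]; constructor <;> [norm_num; linarith]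
  have hmemg : (0:ℝ) ∈ Set.Ioo (gAux K 0) (gAux K 1) := by
    rw [hg0, hg1]; constructor <;> [norm_num; linarith]
  obtain ⟨a, ⟨ha0, ha1⟩, hfa⟩ := intermediate_value_Ioo (by norm_num : (0:ℝ) ≤ 1) hcontf hmemf
  obtain ⟨b, ⟨hb0, hb1⟩, hgb⟩ := intermediate_value_Ioo (by norm_num : (0:ℝ) ≤ 1) hcontg hmemg
  -- a is the root of fAux, b of gAux.  Claim: b < a.
  have hgfa : gAux K a = 4 * a * (1 - a ^ 2) := by
    unfold gAux; unfold fAux at hfa; linear_combination hfa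
  have hga_pos : 0 < gAux K a := by
    rw [hgfa]
    have : 0 < 1 - a ^ 2 := by nlinarith
    positivity
  have hba : b < a := by
    by_contra h
    push_neg at h  -- a ≤ b
    have key : b * gAux K a - a * gAux K b =
        (a - b) * (a * b * (a ^ 2 + a * b + b ^ 2 - 2 * a - 2 * b + 2 * K) + 1) := by
      unfold gAux; ring
    rw [hgb] at key
    have hb2 : (0:ℝ) ≤ a ^ 2 + a * b + b ^ 2 - 2 * a - 2 * b + 2 * K := by
      nlinarith [sq_nonneg (a - 1), sq_nonneg (b - 1), mul_pos ha0 hb0]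
    have hbr : 0 < a * b * (a ^ 2 + a * b + b ^ 2 - 2 * a - 2 * b + 2 * K) + 1 := by
      nlinarith [mul_nonneg (mul_pos ha0 hb0).le hb2]
    nlinarith [mul_pos hb0 hga_pos]
  refine ⟨1 - a ^ 2, 1 - b ^ 2, by nlinarith, by nlinarith, by nlinarith, ?_, ?_, ?_⟩
  · rw [factAux, ← hKdef, hfa, zero_mul]
  · rw [factAux, ← hKdef, hgb, mul_zero]
  · intro t ht
    -- no roots outside (0,1)
    have ht0 : 0 < t := by
      by_contra h
      push_neg at h
      have hpos : 0 < FkQuartic k t := by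
        unfold FkQuartic
        rw [← hKdef]
        have hM : (0:ℝ) ≤ -(4 * (t - 1) * (t - 2) * t * K) := by
          have h0 : -(4 * (t - 1) * (t - 2) * t * K) = 4 * ((1 - t) * (2 - t) * (-t) * K) := by
            ring
          rw [h0]
          have : (0:ℝ) ≤ (1 - t) * (2 - t) * (-t) * K :=
            mul_nonneg (mul_nonneg (mul_nonneg (by linarith) (by linarith)) (by linarith))
              (by linarith)
          linarith
        have hsq : (4:ℝ) ≤ 4 * (1 - t) ^ 2 * K ^ 2 := by
          have e1 : (1:ℝ) ≤ 1 - t := by linarith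
          have h1 : (1:ℝ) ≤ (1 - t) ^ 2 := by nlinarith
          have h2 : (1:ℝ) ≤ K ^ 2 := by nlinarith
          nlinarith [mul_le_mul h1 h2 (by norm_num : (0:ℝ) ≤ 1) (by nlinarith : (0:ℝ) ≤ (1 - t) ^ 2)]
        have ht4 : (0:ℝ) ≤ t ^ 4 := by positivity
        linarith
      rw [ht] at hpos; exact lt_irrefl 0 hpos
    have ht1 : t < 1 := by
      by_contra h
      push_neg at h
      have hpos : 0 < FkQuartic k t := by
        unfold FkQuartic
        rw [← hKdef]
        have hid : 4 * (1 - t) ^ 2 * K ^ 2 - 4 * (t - 1) * (t - 2) * t * K + t ^ 4 =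
            (t ^ 2 - 2 * t + 2 * K * (1 - t)) ^ 2 + 4 * t ^ 2 * (t - 1) := by ring
        rw [hid]
        rcases eq_or_lt_of_le h with rfl | h'
        · nlinarith
        · nlinarith [sq_nonneg (t ^ 2 - 2 * t + 2 * K * (1 - t)),
            mul_pos (mul_pos (by nlinarith : (0:ℝ) < 4 * t ^ 2) (by linarith : (0:ℝ) < t - 1)) one_pos]
      rw [ht] at hpos; exact lt_irrefl 0 hpos
    set w : ℝ := Real.sqrt (1 - t) with hwdef
    have hw2 : w ^ 2 = 1 - t := Real.sq_sqrt (by linarith)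
    have hwpos : 0 < w := Real.sqrt_pos.2 (by linarith)
    have htw : t = 1 - w ^ 2 := by rw [hw2]; ring
    rw [htw, factAux, ← hKdef] at ht
    rcases mul_eq_zero.1 ht with h | h
    · left
      have := fAux_unique hK hwpos ha0 h hfa
      rw [htw, this]
    · right
      have := gAux_unique hK hwpos hb0 h hgb
      rw [htw, this]
end

section
/- Let k ∈ {1,2,3,4} and let p satisfy 0 < p < 1 and F_k(q) > 0 for every q ∈ (0,p] (equivalently, 0 < p < r_k, where r_k is the smallest root of F_k in (0,1)). Define a^±_{p,k} = (±√(F_k(p)) + 2(p−1)k − p(p−2)) / (2(2(p−1)(p−2)k − p³)), b^±_{p,k} = ±√(F_k(p)) / (k(2(p−1)(p−2)k − p³)), c^±_{p,k} = (1/4)(1 + (p−2)k·b^±_{p,k} − 2p·a^±_{p,k}), and f^±_{p,k}(x₁,x₂) = a^±_{p,k}·x₁ + b^±_{p,k}·x₂ + c^±_{p,k}. Then 2(p−1)(p−2)k − p³ > 0, and for each choice of sign, f^±_{p,k}(x) > 0 for every x ∈ Δ_{p,k}. -/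
/-- The Delzant trapezoid Δ_{p,k} of the k-th Hirzebruch surface. -/
def HirzebruchTrapezoid (k : ℕ) (p : ℝ) : Set (ℝ × ℝ) :=
  {x : ℝ × ℝ | 0 ≤ x.1 ∧ 0 ≤ x.2 ∧ 0 ≤ p - x.1 ∧ 0 ≤ (k : ℝ) * (1 - x.1) - x.2}

private lemma stmt13_auxD (k p : ℝ) (hk1 : 1 ≤ k) (hp : 0 < p) (hp1 : p < 1)
    (hF : ∀ q : ℝ, 0 < q → q ≤ p →
      0 < 4 * (1 - q) ^ 2 * k ^ 2 - 4 * (q - 1) * (q - 2) * q * k + q ^ 4) :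
    0 < 2 * (p - 1) * (p - 2) * k - p ^ 3 := by
  by_contra h
  push_neg at h
  have hcont : ContinuousOn (fun q : ℝ => 2 * (q - 1) * (q - 2) * k - q ^ 3)
      (Set.Icc 0 p) := (by continuity : Continuous _).continuousOn
  have h0 : (0:ℝ) ∈ Set.Icc (2 * (p - 1) * (p - 2) * k - p ^ 3)
      (2 * ((0:ℝ) - 1) * ((0:ℝ) - 2) * k - (0:ℝ) ^ 3) := ⟨h, by nlinarith⟩
  obtain ⟨q, hq, hgq⟩ := intermediate_value_Icc' hp.le hcont h0
  have hq0 : 0 < q := by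
    rcases lt_or_eq_of_le hq.1 with h' | h'
    · exact h'
    · exfalso; simp only [← h'] at hgq; nlinarith
  have hFq := hF q hq0 hq.2
  have hq1 : q < 1 := lt_of_le_of_lt hq.2 hp1
  simp only at hgq
  have key : (2 - q) ^ 2 * (4 * (1 - q) ^ 2 * k ^ 2 - 4 * (q - 1) * (q - 2) * q * k + q ^ 4)
      = 4 * q ^ 4 * (q - 1) := by
    linear_combination (2 * (q - 1) * (q - 2) * k + q ^ 3 - 2 * q * (2 - q) ^ 2) * hgq
  nlinarith [mul_pos (pow_pos (show (0:ℝ) < 2 - q by linarith) 2) hFq, pow_pos hq0 4]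

private lemma stmt13_auxT (k p : ℝ) (hk1 : 1 ≤ k) (hp : 0 < p) (hp1 : p < 1)
    (hF : ∀ q : ℝ, 0 < q → q ≤ p →
      0 < 4 * (1 - q) ^ 2 * k ^ 2 - 4 * (q - 1) * (q - 2) * q * k + q ^ 4) :
    0 < 2 * (1 - p) * k - p ^ 2 := by
  by_contra h
  push_neg at h
  have hcont : ContinuousOn (fun q : ℝ => 2 * (1 - q) * k - q ^ 2)
      (Set.Icc 0 p) := (by continuity : Continuous _).continuousOn
  have h0 : (0:ℝ) ∈ Set.Icc (2 * (1 - p) * k - p ^ 2)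
      (2 * (1 - (0:ℝ)) * k - (0:ℝ) ^ 2) := ⟨h, by nlinarith⟩
  obtain ⟨q, hq, hgq⟩ := intermediate_value_Icc' hp.le hcont h0
  have hq0 : 0 < q := by
    rcases lt_or_eq_of_le hq.1 with h' | h'
    · exact h'
    · exfalso; simp only [← h'] at hgq; nlinarith
  have hFq := hF q hq0 hq.2
  have hq1 : q < 1 := lt_of_le_of_lt hq.2 hp1
  simp only at hgq
  have key : 4 * (1 - q) ^ 2 * k ^ 2 - 4 * (q - 1) * (q - 2) * q * k + q ^ 4
      = -(8 * q * (1 - q) ^ 2 * k) := by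
    linear_combination (2 * (1 - q) * k - q ^ 2) * hgq
  nlinarith [mul_pos (mul_pos hq0 (pow_pos (show (0:ℝ) < 1 - q by linarith) 2))
    (show (0:ℝ) < k by linarith)]

private lemma stmt13_auxMain (p kk D S T P E a b c : ℝ)
    (hp : 0 < p) (hp1 : p < 1) (hkk : 0 < kk) (hD : 0 < D)
    (hE1 : -S ≤ E) (hE2 : E ≤ S) (hST : S < T) (hSP : S < P)
    (e00 : 2 * D * c = T - E)
    (e10 : 2 * D * (a * p + c) = (1 - p) * (P - E))
    (e01 : 2 * D * (b * kk + c) = T + E)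
    (e11 : 2 * D * (a * p + b * (kk * (1 - p)) + c) = (1 - p) * (P + E))
    (x₁ x₂ : ℝ) (hx1 : 0 ≤ x₁) (hx2 : 0 ≤ x₂) (hx1p : 0 ≤ p - x₁)
    (hx2k : 0 ≤ kk * (1 - x₁) - x₂) :
    0 < a * x₁ + b * x₂ + c := by
  have hp1' : (0:ℝ) < 1 - p := by linarith
  have hv00 : 0 < c := by nlinarith
  have hv10 : 0 < a * p + c := by nlinarith [mul_pos hp1' (show 0 < P - E by linarith)]
  have hv01 : 0 < b * kk + c := by nlinarith
  have hv11 : 0 < a * p + b * (kk * (1 - p)) + c := by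
    nlinarith [mul_pos hp1' (show 0 < P + E by linarith)]
  rcases le_or_gt 0 b with hbpos | hbneg
  · have hbx : 0 ≤ b * x₂ := mul_nonneg hbpos hx2
    rcases le_or_gt 0 a with hapos | haneg
    · nlinarith [mul_nonneg hapos hx1]
    · nlinarith [mul_nonneg (le_of_lt (neg_pos.mpr haneg)) hx1p]
  · have hbx : b * (kk * (1 - x₁)) ≤ b * x₂ := by nlinarith
    rcases le_or_gt 0 (a - b * kk) with hpos | hneg
    · nlinarith [mul_nonneg hpos hx1]
    · nlinarith [mul_nonneg (le_of_lt (neg_pos.mpr hneg)) hx1p]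

/-- For k ∈ {1,2,3,4} and 0 < p < 1 with F_k > 0 on (0,p]
(i.e. p below the smallest root r_k of F_k in (0,1)), the denominator
2(p−1)(p−2)k − p³ is positive and the Futaki–Ono affine linear functions
f^±_{p,k}(x₁,x₂) = a^±_{p,k}x₁ + b^±_{p,k}x₂ + c^±_{p,k} (ε = ±1) are strictly
positive on Δ_{p,k}. -/
theorem stmt13 (k : ℕ) (hk : k ∈ ({1, 2, 3, 4} : Set ℕ))
    (p : ℝ) (hp : 0 < p) (hp1 : p < 1)
    (hF : ∀ q : ℝ, 0 < q → q ≤ p → 0 < FkQuartic k q)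
    (ε : ℝ) (hε : ε = 1 ∨ ε = -1)
    (a b c : ℝ)
    (ha : a = (ε * Real.sqrt (FkQuartic k p) + 2 * (p - 1) * (k : ℝ) - p * (p - 2)) /
        (2 * (2 * (p - 1) * (p - 2) * (k : ℝ) - p ^ 3)))
    (hb : b = ε * Real.sqrt (FkQuartic k p) /
        ((k : ℝ) * (2 * (p - 1) * (p - 2) * (k : ℝ) - p ^ 3)))
    (hc : c = (1 / 4) * (1 + (p - 2) * (k : ℝ) * b - 2 * p * a)) :
    0 < 2 * (p - 1) * (p - 2) * (k : ℝ) - p ^ 3 ∧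
    ∀ x ∈ HirzebruchTrapezoid k p, 0 < a * x.1 + b * x.2 + c := by
  have hk1 : (1:ℝ) ≤ (k : ℝ) := by
    simp only [Set.mem_insert_iff, Set.mem_singleton_iff] at hk
    rcases hk with h | h | h | h <;> subst h <;> norm_num
  have hF' : ∀ q : ℝ, 0 < q → q ≤ p →
      0 < 4 * (1 - q) ^ 2 * (k:ℝ) ^ 2 - 4 * (q - 1) * (q - 2) * q * (k:ℝ) + q ^ 4 :=
    fun q hq hqp => hF q hq hqp
  have hD : 0 < 2 * (p - 1) * (p - 2) * (k : ℝ) - p ^ 3 := stmt13_auxD _ _ hk1 hp hp1 hF'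
  have hT : 0 < 2 * (1 - p) * (k : ℝ) - p ^ 2 := stmt13_auxT _ _ hk1 hp hp1 hF'
  refine ⟨hD, ?_⟩
  set S := Real.sqrt (FkQuartic k p) with hSdef
  have hF0 : 0 < FkQuartic k p := hF p hp le_rfl
  have hS0 : 0 < S := Real.sqrt_pos.mpr hF0
  have hS2 : S ^ 2 = FkQuartic k p := Real.sq_sqrt hF0.le
  have hid : (2 * (1 - p) * (k : ℝ) - p ^ 2) ^ 2
      = FkQuartic k p + 8 * p * (1 - p) ^ 2 * (k : ℝ) := by
    unfold FkQuartic; ring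
  have hST : S < 2 * (1 - p) * (k : ℝ) - p ^ 2 := by
    nlinarith [hS2, hT, hS0, hid, mul_pos (mul_pos hp
      (pow_pos (show (0:ℝ) < 1 - p by linarith) 2)) (show (0:ℝ) < (k:ℝ) by linarith)]
  have hST2 : S < 2 * (1 - p) * (k : ℝ) + p ^ 2 := by nlinarith
  set D := 2 * (p - 1) * (p - 2) * (k : ℝ) - p ^ 3 with hDdef
  have hDne : D ≠ 0 := ne_of_gt hD
  have hkne : (k : ℝ) ≠ 0 := by linarith
  have haD : 2 * D * a = ε * S + 2 * (p - 1) * (k : ℝ) - p * (p - 2) := by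
    rw [ha]; field_simp
  have hbD : (k : ℝ) * D * b = ε * S := by
    rw [hb]; field_simp
  have h2Dc : 2 * D * c = 2 * (1 - p) * (k : ℝ) - p ^ 2 - ε * S := by
    rw [hc]
    linear_combination ((p - 2) / 2) * hbD - (p / 2) * haD + (1 / 2) * hDdef
  have h2D10 : 2 * D * (a * p + c) = (1 - p) * (2 * (1 - p) * (k : ℝ) + p ^ 2 - ε * S) := by
    linear_combination p * haD + h2Dc
  have h2D01 : 2 * D * (b * (k : ℝ) + c) = 2 * (1 - p) * (k : ℝ) - p ^ 2 + ε * S := by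
    linear_combination 2 * hbD + h2Dc
  have h2D11 : 2 * D * (a * p + b * ((k : ℝ) * (1 - p)) + c)
      = (1 - p) * (2 * (1 - p) * (k : ℝ) + p ^ 2 + ε * S) := by
    linear_combination p * haD + 2 * (1 - p) * hbD + h2Dc
  have hεS1 : -S ≤ ε * S := by rcases hε with h | h <;> rw [h] <;> linarith
  have hεS2 : ε * S ≤ S := by rcases hε with h | h <;> rw [h] <;> linarith
  rintro ⟨x₁, x₂⟩ ⟨hx1, hx2, hx1p, hx2k⟩
  exact stmt13_auxMain p (k:ℝ) D S (2 * (1 - p) * (k : ℝ) - p ^ 2)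
    (2 * (1 - p) * (k : ℝ) + p ^ 2) (ε * S) a b c hp hp1 (by linarith) hD
    hεS1 hεS2 hST hST2 h2Dc h2D10 h2D01 h2D11 x₁ x₂ hx1 hx2 hx1p hx2k
end

section
/- Let k ∈ {1,2,3,4} and p ∈ (0,1) with F_k(p) ≥ 0 and 2(p−1)(p−2)k − p³ ≠ 0. Define a^±_{p,k} = (±√(F_k(p)) + 2(p−1)k − p(p−2)) / (2(2(p−1)(p−2)k − p³)), b^±_{p,k} = ±√(F_k(p)) / (k(2(p−1)(p−2)k − p³)), c^±_{p,k} = (1/4)(1 + (p−2)k·b^±_{p,k} − 2p·a^±_{p,k}), and f^±_{p,k}(x₁,x₂) = a^±_{p,k}·x₁ + b^±_{p,k}·x₂ + c^±_{p,k}. Let s₁ = (0,0), s₂ = (p,0), s₃ = (p,(1−p)k), s₄ = (0,k) be the vertices of Δ_{p,k} in cyclic order. If f^±_{p,k}(s_i) ≠ 0 for i = 1,2,3,4, then for each choice of sign, 1/f^±_{p,k}(s₁) − 1/f^±_{p,k}(s₂) + 1/f^±_{p,k}(s₃) − 1/f^±_{p,k}(s₄) = 0. (This is the equipoised condition for the f^±_{p,k}-twist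 of Δ_{p,k}.) -/
def futakiOnoDenom (k : ℕ) (p : ℝ) : ℝ := 2 * (p - 1) * (p - 2) * k - p ^ 3

def futakiOnoShift (k : ℕ) (p : ℝ) : ℝ := 2 * (p - 1) * k - p * (p - 2)

theorem four_mul_sub_one_mul_FkQuartic (k : ℕ) (p : ℝ) :
    4 * (p - 1) * FkQuartic k p = futakiOnoDenom k p ^ 2 + p ^ 2 * futakiOnoShift k p ^ 2
      + 2 * (2 - p) * futakiOnoShift k p * futakiOnoDenom k p := by
  unfold FkQuartic futakiOnoDenom futakiOnoShift
  ring

/-- Clearing denominators in `1/x₁ − 1/x₂ + 1/x₃ − 1/x₄`. -/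
def alternatingNumerator (x₁ x₂ x₃ x₄ : ℝ) : ℝ :=
  (x₂ - x₁) * x₃ * x₄ + (x₄ - x₃) * x₁ * x₂

theorem alternatingNumerator_mul (t x₁ x₂ x₃ x₄ : ℝ) :
    alternatingNumerator (t * x₁) (t * x₂) (t * x₃) (t * x₄)
      = t ^ 3 * alternatingNumerator x₁ x₂ x₃ x₄ := by
  unfold alternatingNumerator
  ring

theorem one_div_sub_one_div_add_one_div_sub_one_div_eq_zero {x₁ x₂ x₃ x₄ : ℝ}
    (h₁ : x₁ ≠ 0) (h₂ : x₂ ≠ 0) (h₃ : x₃ ≠ 0) (h₄ : x₄ ≠ 0)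
    (h : alternatingNumerator x₁ x₂ x₃ x₄ = 0) :
    1 / x₁ - 1 / x₂ + 1 / x₃ - 1 / x₄ = 0 := by
  unfold alternatingNumerator at h
  field_simp
  linear_combination h

theorem alternatingNumerator_vertexValues (D u p s : ℝ) :
    alternatingNumerator (D - p * u - 2 * s) (D + p * u + 2 * (p - 1) * s)
        (D + p * u - 2 * (p - 1) * s) (D - p * u + 2 * s)
      = 4 * p * s * (D ^ 2 + p ^ 2 * u ^ 2 + 2 * (2 - p) * u * D - 4 * (p - 1) * s ^ 2) := by
  unfold alternatingNumerator
  ring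

theorem four_mul_futakiOnoDenom_mul_affine {k : ℕ} {p s a b c : ℝ}
    (hk : (k : ℝ) ≠ 0) (hD : futakiOnoDenom k p ≠ 0)
    (ha : a = (s + futakiOnoShift k p) / (2 * futakiOnoDenom k p))
    (hb : b = s / (k * futakiOnoDenom k p))
    (hc : c = 1 / 4 * (1 + (p - 2) * k * b - 2 * p * a)) (x : ℝ × ℝ) :
    4 * futakiOnoDenom k p * (a * x.1 + b * x.2 + c)
      = futakiOnoDenom k p - p * futakiOnoShift k p - 2 * s
        + 2 * (s + futakiOnoShift k p) * x.1 + 4 * s * x.2 / k := by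
  subst hc ha hb
  field_simp
  ring

theorem stmt17_general (k : ℕ) (hk : k ∈ ({1, 2, 3, 4} : Set ℕ))
    (p : ℝ)
    (hF : 0 ≤ FkQuartic k p)
    (hden : 2 * (p - 1) * (p - 2) * (k : ℝ) - p ^ 3 ≠ 0)
    (ε : ℝ) (hε : ε = 1 ∨ ε = -1)
    (a b c : ℝ)
    (ha : a = (ε * Real.sqrt (FkQuartic k p) + 2 * (p - 1) * (k : ℝ) - p * (p - 2)) /
        (2 * (2 * (p - 1) * (p - 2) * (k : ℝ) - p ^ 3)))
    (hb : b = ε * Real.sqrt (FkQuartic k p) /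
        ((k : ℝ) * (2 * (p - 1) * (p - 2) * (k : ℝ) - p ^ 3)))
    (hc : c = (1 / 4) * (1 + (p - 2) * (k : ℝ) * b - 2 * p * a))
    (f : ℝ × ℝ → ℝ) (hf : ∀ x, f x = a * x.1 + b * x.2 + c)
    (h1 : f (0, 0) ≠ 0) (h2 : f (p, 0) ≠ 0)
    (h3 : f (p, (1 - p) * (k : ℝ)) ≠ 0) (h4 : f (0, (k : ℝ)) ≠ 0) :
    1 / f (0, 0) - 1 / f (p, 0) + 1 / f (p, (1 - p) * (k : ℝ)) - 1 / f (0, (k : ℝ)) = 0 := by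
  have hk0 : (k : ℝ) ≠ 0 := by rcases hk with rfl | rfl | rfl | rfl <;> norm_num
  set s := ε * Real.sqrt (FkQuartic k p)
  have hs : s ^ 2 = FkQuartic k p := by
    rw [mul_pow, Real.sq_sqrt hF]
    rcases hε with rfl | rfl <;> norm_num
  have hD : futakiOnoDenom k p ≠ 0 := hden
  have hscale := four_mul_futakiOnoDenom_mul_affine hk0 hD
    (by rw [ha, futakiOnoShift, futakiOnoDenom]; ring) hb hc
  simp only [← hf] at hscale
  refine one_div_sub_one_div_add_one_div_sub_one_div_eq_zero h1 h2 h3 h4 ?_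
  refine (pow_ne_zero 3 (mul_ne_zero four_ne_zero hD)).isUnit.mul_left_cancel ?_
  set D := futakiOnoDenom k p
  set u := futakiOnoShift k p
  calc (4 * D) ^ 3 * alternatingNumerator (f (0, 0)) (f (p, 0)) (f (p, (1 - p) * k)) (f (0, k))
      = alternatingNumerator (D - p * u - 2 * s) (D + p * u + 2 * (p - 1) * s)
          (D + p * u - 2 * (p - 1) * s) (D - p * u + 2 * s) := by
        rw [← alternatingNumerator_mul, hscale, hscale, hscale, hscale]
        congr 1 <;> field_simp <;> ring
    _ = 4 * p * s * (D ^ 2 + p ^ 2 * u ^ 2 + 2 * (2 - p) * u * D - 4 * (p - 1) * s ^ 2) :=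
        alternatingNumerator_vertexValues D u p s
    _ = (4 * D) ^ 3 * 0 := by rw [← four_mul_sub_one_mul_FkQuartic, hs]; ring

/-- The equipoised condition for the f^±_{p,k}-twist of Δ_{p,k}:
with the Futaki–Ono affine linear function f^±_{p,k} = a x₁ + b x₂ + c and the
vertices s₁ = (0,0), s₂ = (p,0), s₃ = (p,(1−p)k), s₄ = (0,k) of Δ_{p,k} in
cyclic order, if f^±_{p,k}(sᵢ) ≠ 0 for all i then
1/f(s₁) − 1/f(s₂) + 1/f(s₃) − 1/f(s₄) = 0. -/
theorem stmt17 (k : ℕ) (hk : k ∈ ({1, 2, 3, 4} : Set ℕ))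
    (p : ℝ) (hp : 0 < p) (hp1 : p < 1)
    (hF : 0 ≤ FkQuartic k p)
    (hden : 2 * (p - 1) * (p - 2) * (k : ℝ) - p ^ 3 ≠ 0)
    (ε : ℝ) (hε : ε = 1 ∨ ε = -1)
    (a b c : ℝ)
    (ha : a = (ε * Real.sqrt (FkQuartic k p) + 2 * (p - 1) * (k : ℝ) - p * (p - 2)) /
        (2 * (2 * (p - 1) * (p - 2) * (k : ℝ) - p ^ 3)))
    (hb : b = ε * Real.sqrt (FkQuartic k p) /
        ((k : ℝ) * (2 * (p - 1) * (p - 2) * (k : ℝ) - p ^ 3)))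
    (hc : c = (1 / 4) * (1 + (p - 2) * (k : ℝ) * b - 2 * p * a))
    (f : ℝ × ℝ → ℝ) (hf : ∀ x, f x = a * x.1 + b * x.2 + c)
    (h1 : f (0, 0) ≠ 0) (h2 : f (p, 0) ≠ 0)
    (h3 : f (p, (1 - p) * (k : ℝ)) ≠ 0) (h4 : f (0, (k : ℝ)) ≠ 0) :
    1 / f (0, 0) - 1 / f (p, 0) + 1 / f (p, (1 - p) * (k : ℝ)) - 1 / f (0, (k : ℝ)) = 0 :=
  stmt17_general k hk p hF hden ε hε a b c ha hb hc f hf h1 h2 h3 h4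
end
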